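/- arXiv:2603.19973 — 7 statements merged into one kernel-verified Lean document; each statement's English description precedes it below -/
import Mathlib

section
/- Let X be a Polish space, let u, l : X → ℝ take values in a common finite set {y_1 < ⋯ < y_N}, with u upper semi-analytic, l lower semi-analytic, and u ≤ l pointwise. Then there exists a Borel measurable simple function f : X → ℝ taking values in {y_1, …, y_N} with u ≤ f ≤ l pointwise. -/
open MeasureTheory

/-- Sandwich lemma for simple functions valued in a common finite ordered set. -/
theorem simple_sandwich {X : Type*} [TopologicalSpace X] [PolishSpace X]
    [MeasurableSpace X] [BorelSpace X]
    (N : ℕ) (y : Fin N → ℝ) (hy : StrictMono y)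
    (u l : X → ℝ)
    (hu_range : ∀ x, u x ∈ Set.range y) (hl_range : ∀ x, l x ∈ Set.range y)
    (husa : ∀ γ : ℝ, AnalyticSet {x | γ < u x})
    (hlsa : ∀ γ : ℝ, AnalyticSet {x | l x < γ})
    (hul : ∀ x, u x ≤ l x) :
    ∃ f : X → ℝ, Measurable f ∧ (∀ x, f x ∈ Set.range y) ∧
      ∀ x, u x ≤ f x ∧ f x ≤ l x := by
  classical
  rcases isEmpty_or_nonempty X with hX | hX
  · have : Subsingleton X := Subsingleton.intro (fun a => isEmptyElim a)
    exact ⟨u, Subsingleton.measurable, fun x => isEmptyElim x, fun x => isEmptyElim x⟩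
  · obtain ⟨x₀⟩ := hX
    have hN : 0 < N := by
      obtain ⟨i, _⟩ := hu_range x₀
      exact i.pos
    -- the sets {u ≥ y i}
    set S : Fin N → Set X := fun i => {x | y i ≤ u x} with hS_def
    set T : Fin N → Set X := fun i => {x | l x < y i} with hT_def
    have hS : ∀ i, AnalyticSet (S i) := by
      intro i
      rcases Nat.eq_zero_or_pos i.val with hi | hi
      · have : S i = {x | y i - 1 < u x} := by
          ext x
          simp only [hS_def, Set.mem_setOf_eq]
          constructor
          · intro h; linarith
          · intro _
            obtain ⟨m, hm⟩ := hu_range x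
            have : i ≤ m := by
              rw [Fin.le_def, hi]; exact Nat.zero_le _
            calc y i ≤ y m := hy.monotone this
              _ = u x := hm
        rw [this]; exact husa _
      · set p : Fin N := ⟨i.val - 1, lt_of_le_of_lt (Nat.pred_le _) i.isLt⟩ with hp
        have : S i = {x | y p < u x} := by
          ext x
          simp only [hS_def, Set.mem_setOf_eq]
          constructor
          · intro h
            have : p < i := by
              rw [Fin.lt_def, hp]; simp only []; omega
            exact lt_of_lt_of_le (hy this) h
          · intro h
            obtain ⟨m, hm⟩ := hu_range x
            have hpm : p < m := hy.lt_iff_lt.mp (hm ▸ h)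
            have : i ≤ m := by
              rw [Fin.le_def]
              have h2 := Fin.lt_def.mp hpm
              have h3 : (p : ℕ) = i.val - 1 := rfl
              omega
            calc y i ≤ y m := hy.monotone this
              _ = u x := hm
        rw [this]; exact husa _
    have hT : ∀ i, AnalyticSet (T i) := fun i => hlsa _
    have hdisj : ∀ i, Disjoint (S i) (T i) := by
      intro i
      rw [Set.disjoint_left]
      intro x hx hx'
      simp only [hS_def, hT_def, Set.mem_setOf_eq] at hx hx'
      have := hul x
      linarith
    have hsep : ∀ i, ∃ C : Set X, S i ⊆ C ∧ Disjoint (T i) C ∧ MeasurableSet C :=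
      fun i => (hS i).measurablySeparable (hT i) (hdisj i)
    choose C hSC hTC hCmeas using hsep
    -- nested intersections
    set C' : Fin N → Set X := fun i => ⋂ (j : Fin N) (_ : j ≤ i), C j with hC'_def
    have hC'meas : ∀ i, MeasurableSet (C' i) :=
      fun i => MeasurableSet.iInter fun j => MeasurableSet.iInter fun _ => hCmeas j
    have hSC' : ∀ i x, x ∈ S i → x ∈ C' i := by
      intro i x hx
      simp only [hC'_def, Set.mem_iInter]
      intro j hj
      apply hSC j
      simp only [hS_def, Set.mem_setOf_eq] at hx ⊢
      exact le_trans (hy.monotone hj) hx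
    -- the index function
    have hne : ∀ x, (Finset.univ.filter (fun i => x ∈ C' i)).Nonempty := by
      intro x
      refine ⟨⟨0, hN⟩, ?_⟩
      simp only [Finset.mem_filter, Finset.mem_univ, true_and]
      apply hSC'
      simp only [hS_def, Set.mem_setOf_eq]
      obtain ⟨m, hm⟩ := hu_range x
      have : (⟨0, hN⟩ : Fin N) ≤ m := by rw [Fin.le_def]; exact Nat.zero_le _
      calc y ⟨0, hN⟩ ≤ y m := hy.monotone this
        _ = u x := hm
    set k : X → Fin N := fun x => (Finset.univ.filter (fun i => x ∈ C' i)).max' (hne x)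
      with hk_def
    have hkC : ∀ x, x ∈ C' (k x) := by
      intro x
      have := Finset.max'_mem (Finset.univ.filter (fun i => x ∈ C' i)) (hne x)
      simpa only [Finset.mem_filter, Finset.mem_univ, true_and] using this
    have hk_ge : ∀ x i, x ∈ C' i → i ≤ k x := by
      intro x i hx
      apply Finset.le_max'
      simp only [Finset.mem_filter, Finset.mem_univ, true_and]
      exact hx
    have hkmeas : Measurable k := by
      apply measurable_to_countable'
      intro i
      have : k ⁻¹' {i} = C' i ∩ ⋂ (j : Fin N) (_ : i < j), (C' j)ᶜ := by
        ext x
        simp only [Set.mem_preimage, Set.mem_singleton_iff, Set.mem_inter_iff,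
          Set.mem_iInter, Set.mem_compl_iff]
        constructor
        · rintro rfl
          exact ⟨hkC x, fun j hj hxj => absurd (hk_ge x j hxj) (not_le.mpr hj)⟩
        · rintro ⟨h1, h2⟩
          refine le_antisymm ?_ (hk_ge x i h1)
          by_contra h
          exact h2 (k x) (not_le.mp h) (hkC x)
      rw [this]
      exact (hC'meas i).inter (MeasurableSet.iInter fun j =>
        MeasurableSet.iInter fun _ => (hC'meas j).compl)
    refine ⟨fun x => y (k x), (measurable_from_top (f := y)).comp hkmeas,
      fun x => ⟨k x, rfl⟩, fun x => ⟨?_, ?_⟩⟩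
    · obtain ⟨m, hm⟩ := hu_range x
      have hxm : x ∈ C' m := hSC' m x (by simp [hS_def, hm.le, hm])
      have : m ≤ k x := hk_ge x m hxm
      calc u x = y m := hm.symm
        _ ≤ y (k x) := hy.monotone this
    · have hxC : x ∈ C (k x) := by
        have := hkC x
        simp only [hC'_def, Set.mem_iInter] at this
        exact this (k x) le_rfl
      have : x ∉ T (k x) := fun hxT => (Set.disjoint_left.mp (hTC (k x)) hxT) hxC
      simp only [hT_def, Set.mem_setOf_eq, not_lt] at this
      exact this
end

section
/- (Analytic sandwich lemma) Let X be a Polish space, u : X → ℝ upper semi-analytic and l : X → ℝ lower semi-analytic with u(x) ≤ l(x) for all x ∈ X. Then there exists a Borel measurable function f : X → ℝ with u(x) ≤ f(x) ≤ l(x) for all x ∈ X. -/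
open MeasureTheory

/-- Analytic sandwich lemma: between an upper semi-analytic function and a larger
lower semi-analytic function there is a Borel function. -/
theorem analytic_sandwich {X : Type*} [TopologicalSpace X] [PolishSpace X]
    [MeasurableSpace X] [BorelSpace X]
    (u l : X → ℝ)
    (husa : ∀ γ : ℝ, AnalyticSet {x | γ < u x})
    (hlsa : ∀ γ : ℝ, AnalyticSet {x | l x < γ})
    (hul : ∀ x, u x ≤ l x) :
    ∃ f : X → ℝ, Measurable f ∧ ∀ x, u x ≤ f x ∧ f x ≤ l x := by
  have hsep : ∀ q : ℚ, MeasurablySeparable {x | (q : ℝ) < u x} {x | l x < (q : ℝ)} := by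
    intro q
    refine (husa q).measurablySeparable (hlsa q) ?_
    rw [Set.disjoint_left]
    intro x hx hx'
    exact absurd (hul x) (not_le.2 (lt_trans hx' hx))
  choose C hAC hBC hCmeas using hsep
  set S : X → Set ℝ := fun x => {r | ∃ q : ℚ, x ∈ C q ∧ (q : ℝ) = r} with hS
  have hSne : ∀ x, (S x).Nonempty := by
    intro x
    obtain ⟨q, hq⟩ := exists_rat_lt (u x)
    exact ⟨q, q, hAC q hq, rfl⟩
  have hSbdd : ∀ x, BddAbove (S x) := by
    intro x
    refine ⟨l x, ?_⟩
    rintro r ⟨q, hq, rfl⟩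
    by_contra h
    exact (Set.disjoint_left.1 (hBC q)) (not_le.1 h) hq
  refine ⟨fun x => sSup (S x), ?_, ?_⟩
  · apply measurable_of_Ioi
    intro γ
    have : (fun x => sSup (S x)) ⁻¹' Set.Ioi γ = ⋃ q : {q : ℚ // γ < (q : ℝ)}, C q := by
      ext x
      simp only [Set.mem_preimage, Set.mem_Ioi, Set.mem_iUnion]
      rw [lt_csSup_iff (hSbdd x) (hSne x)]
      constructor
      · rintro ⟨r, ⟨q, hq, rfl⟩, hr⟩
        exact ⟨⟨q, hr⟩, hq⟩
      · rintro ⟨⟨q, hq⟩, hx⟩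
        exact ⟨q, ⟨q, hx, rfl⟩, hq⟩
    rw [this]
    exact MeasurableSet.iUnion fun q => hCmeas q
  · intro x
    constructor
    · refine le_of_forall_lt fun c hc => ?_
      obtain ⟨q, hcq, hqu⟩ := exists_rat_btwn hc
      exact lt_of_lt_of_le hcq (le_csSup (hSbdd x) ⟨q, hAC q hqu, rfl⟩)
    · refine csSup_le (hSne x) ?_
      rintro r ⟨q, hq, rfl⟩
      by_contra h
      exact (Set.disjoint_left.1 (hBC q)) (not_le.1 h) hq
end

section
/- (Novikov separation, countable cover form) Let X be a Polish space and (A_n)_{n∈ℕ} a sequence of coanalytic subsets of X with ⋃_n A_n = X. Then there exist Borel sets B_n with B_n ⊆ A_n for every n and ⋃_n B_n = X. -/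
/-!
Call a family of sets `Cₙ` measurably separable if there are Borel sets `Dₙ ⊇ Cₙ` with empty
intersection; the theorem is the separability of the complements `(Aₙ)ᶜ`. Separability survives
countable unions in one coordinate, so if the family `Cₙ = fₙ '' (ℕ → ℕ)` of analytic sets is not
separable, one may successively shrink the parameter sets to longer and longer cylinders, visiting
every coordinate infinitely often, while keeping the family non-separable. The cylinders shrink to
points `wₙ`; since `⋂ Cₙ = ∅`, two of the values `fₙ wₙ` differ, and disjoint open neighbourhoods of
them separate the images of small enough cylinders, a contradiction.
-/

open MeasureTheory Set Function PiNat

section Separable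

variable {X ι : Type*} [MeasurableSpace X]

def MeasurablySeparableFamily (S : ι → Set X) : Prop :=
  ∃ D : ι → Set X, (∀ i, MeasurableSet (D i)) ∧ (∀ i, S i ⊆ D i) ∧ ⋂ i, D i = ∅

namespace MeasurablySeparableFamily

variable {S : ι → Set X}

theorem of_eq_empty [DecidableEq ι] {i : ι} (h : S i = ∅) : MeasurablySeparableFamily S := by
  refine ⟨update (fun _ => univ) i ∅, fun j => ?_, fun j => ?_, ?_⟩
  · rcases eq_or_ne j i with rfl | hj <;> simp [*]
  · rcases eq_or_ne j i with rfl | hj <;> simp [*]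
  · exact eq_empty_of_subset_empty ((iInter_subset _ i).trans (by simp))

theorem of_disjoint [DecidableEq ι] {i j : ι} (hij : i ≠ j) {U V : Set X}
    (hU : MeasurableSet U) (hV : MeasurableSet V) (hUV : Disjoint U V)
    (hi : S i ⊆ U) (hj : S j ⊆ V) : MeasurablySeparableFamily S := by
  refine ⟨update (update (fun _ => univ) i U) j V, fun k => ?_, fun k => ?_, ?_⟩
  · rcases eq_or_ne k j with rfl | hkj
    · simpa
    rcases eq_or_ne k i with rfl | hki <;> simp [*]
  · rcases eq_or_ne k j with rfl | hkj
    · simpa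
    rcases eq_or_ne k i with rfl | hki <;> simp [*]
  · refine eq_empty_of_subset_empty fun x hx => hUV.le_bot ⟨?_, ?_⟩
    · simpa [hij] using mem_iInter.1 hx i
    · simpa using mem_iInter.1 hx j

theorem of_subset_iUnion [DecidableEq ι] {κ : Type*} [Countable κ] {T : κ → ι → Set X} (i : ι)
    (hi : S i ⊆ ⋃ k, T k i) (hne : ∀ k, ∀ j ≠ i, S j ⊆ T k j)
    (hT : ∀ k, MeasurablySeparableFamily (T k)) : MeasurablySeparableFamily S := by
  choose D hDm hTD hD using hT
  refine ⟨fun j => if j = i then ⋃ k, D k i else ⋂ k, D k j, fun j => ?_, fun j => ?_, ?_⟩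
  · dsimp only
    split_ifs
    exacts [.iUnion fun k => hDm k i, .iInter fun k => hDm k j]
  · dsimp only
    split_ifs with hj
    · subst hj
      exact hi.trans (iUnion_mono fun k => hTD k j)
    · exact subset_iInter fun k => (hne k j hj).trans (hTD k j)
  · refine eq_empty_of_subset_empty fun x hx => ?_
    obtain ⟨k, hk⟩ := mem_iUnion.1 (by simpa using mem_iInter.1 hx i)
    rw [← hD k]
    refine mem_iInter.2 fun j => ?_
    rcases eq_or_ne j i with rfl | hj
    · exact hk
    · have hxj := mem_iInter.1 hx j
      rw [if_neg hj] at hxj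
      exact mem_iInter.1 hxj k

end MeasurablySeparableFamily

end Separable

namespace PiNat

variable {E : ℕ → Type*}

theorem exists_forall_cylinder {Q : Set (∀ n, E n) → Prop} (x₀ : ∀ n, E n)
    (h₀ : Q (cylinder x₀ 0))
    (hstep : ∀ x n, Q (cylinder x n) → ∃ k, Q (cylinder (update x n k) (n + 1))) :
    ∃ x, ∀ n, Q (cylinder x n) := by
  have (n : ℕ) : Nonempty (E n) := ⟨x₀ n⟩
  choose! next hnext using hstep
  let s : ℕ → ∀ n, E n := fun n => Nat.rec x₀ (fun n x => update x n (next x n)) n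
  have hs : ∀ n, Q (cylinder (s n) n) := fun n => by
    induction n with
    | zero => exact h₀
    | succ n ih => exact hnext _ _ ih
  have hmono : ∀ m n, m ≤ n → s n ∈ cylinder (s m) m := fun m => Nat.le_induction
    (self_mem_cylinder _ _) fun n hmn ih i hi =>
      (update_mem_cylinder (s n) n _ i (hi.trans_le hmn)).trans (ih i hi)
  refine ⟨fun i => s (i + 1) i, fun n => ?_⟩
  rw [mem_cylinder_iff_eq.1 fun i hi => (hmono (i + 1) n hi i i.lt_succ_self).symm]
  exact hs n

theorem exists_image_cylinder_subset {Y : Type*} [∀ n, TopologicalSpace (E n)]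
    [∀ n, DiscreteTopology (E n)] [TopologicalSpace Y] {f : (∀ n, E n) → Y} {x : ∀ n, E n}
    (hf : ContinuousAt f x) {U : Set Y} (hU : U ∈ nhds (f x)) : ∃ n, f '' cylinder x n ⊆ U := by
  obtain ⟨_, ⟨y, n, rfl⟩, hxy, hyU⟩ :=
    (isTopologicalBasis_cylinders E).mem_nhds_iff.1 (hf.preimage_mem_nhds hU)
  exact ⟨n, image_subset_iff.2 (mem_cylinder_iff_eq.1 hxy ▸ hyU)⟩

end PiNat

/-- Reads the `n`-th of countably many Baire-space parameters off a single one, so that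
lengthening a cylinder around the single parameter refines their cylinders one coordinate at a
time. -/
def pairSlice (n : ℕ) (w : ℕ → ℕ) : ℕ → ℕ := fun i => w (Nat.pair n i)

theorem continuous_pairSlice (n : ℕ) : Continuous (pairSlice n) :=
  continuous_pi fun _ => continuous_apply _

theorem pairSlice_surjective (n : ℕ) : Surjective (pairSlice n) :=
  fun x => ⟨fun j => x (Nat.unpair j).2, funext fun i => by simp [pairSlice]⟩

theorem pairSlice_update_of_ne {n t : ℕ} (h : n ≠ (Nat.unpair t).1) (w : ℕ → ℕ) (k : ℕ) :
    pairSlice n (update w t k) = pairSlice n w := by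
  refine funext fun i => update_of_ne (fun hit => h ?_) _ _
  rw [← hit, Nat.unpair_pair]

theorem update_mem_cylinder_update {z w : ℕ → ℕ} {t : ℕ} (hw : w ∈ cylinder z t) (k : ℕ) :
    update w t k ∈ cylinder (update z t k) (t + 1) := by
  intro i hi
  rcases (Nat.lt_succ_iff_lt_or_eq.1 hi) with hit | rfl
  · simp [hit.ne, hw i hit]
  · simp

section Novikov

variable {X : Type*} [MeasurableSpace X]

theorem measurablySeparableFamily_image_cylinder (f : ℕ → (ℕ → ℕ) → X) (z : ℕ → ℕ) (t : ℕ)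
    (h : ∀ k, MeasurablySeparableFamily fun n =>
      (f n ∘ pairSlice n) '' cylinder (update z t k) (t + 1)) :
    MeasurablySeparableFamily fun n => (f n ∘ pairSlice n) '' cylinder z t := by
  refine .of_subset_iUnion (Nat.unpair t).1 ?_ (fun k n hn => ?_) h
  · exact (image_mono (iUnion_cylinder_update z t).ge).trans image_iUnion.subset
  · rintro _ ⟨w, hw, rfl⟩
    exact ⟨update w t k, update_mem_cylinder_update hw k, by simp [pairSlice_update_of_ne hn]⟩

variable [TopologicalSpace X] [T2Space X] [OpensMeasurableSpace X]

theorem measurablySeparableFamily_range {f : ℕ → (ℕ → ℕ) → X} (hf : ∀ n, Continuous (f n))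
    (h : ⋂ n, range (f n) = ∅) : MeasurablySeparableFamily fun n => range (f n) := by
  set g := fun n => f n ∘ pairSlice n
  have hg : ∀ n, range (g n) = range (f n) := fun n => (pairSlice_surjective n).range_comp _
  by_contra hsep
  obtain ⟨w, hw⟩ := exists_forall_cylinder (Q := fun C => ¬MeasurablySeparableFamily (g · '' C))
    (fun _ => 0) (by simpa [image_univ, hg] using hsep) fun z t hz => by
      by_contra! hall
      exact hz (measurablySeparableFamily_image_cylinder f z t hall)
  obtain ⟨n, m, hnm⟩ : ∃ n m, g n w ≠ g m w := by
    by_contra! hall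
    refine (eq_empty_iff_forall_notMem.1 h) (g 0 w) (mem_iInter.2 fun n => ?_)
    rw [← hg, hall 0 n]
    exact mem_range_self w
  have hne : n ≠ m := by rintro rfl; exact hnm rfl
  obtain ⟨U, V, hU, hV, hwU, hwV, hUV⟩ := t2_separation hnm
  have hgc (n : ℕ) : Continuous (g n) := (hf n).comp (continuous_pairSlice n)
  obtain ⟨t₁, ht₁⟩ := exists_image_cylinder_subset (hgc n).continuousAt (hU.mem_nhds hwU)
  obtain ⟨t₂, ht₂⟩ := exists_image_cylinder_subset (hgc m).continuousAt (hV.mem_nhds hwV)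
  refine hw (max t₁ t₂) (.of_disjoint hne hU.measurableSet hV.measurableSet hUV ?_ ?_)
  · exact (image_mono (cylinder_anti _ (le_max_left _ _))).trans ht₁
  · exact (image_mono (cylinder_anti _ (le_max_right _ _))).trans ht₂

theorem MeasureTheory.AnalyticSet.measurablySeparableFamily {C : ℕ → Set X}
    (hC : ∀ n, AnalyticSet (C n)) (h : ⋂ n, C n = ∅) : MeasurablySeparableFamily C := by
  by_cases hempty : ∃ n, C n = ∅
  · obtain ⟨n, hn⟩ := hempty
    exact .of_eq_empty hn
  simp only [not_exists] at hempty
  have hrange (n : ℕ) : ∃ f : (ℕ → ℕ) → X, Continuous f ∧ range f = C n := by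
    have hCn := hC n
    rw [AnalyticSet] at hCn
    exact hCn.resolve_left (hempty n)
  choose f hf hfC using hrange
  obtain rfl : (fun n => range (f n)) = C := funext hfC
  exact measurablySeparableFamily_range hf h

end Novikov

/-- Novikov separation, countable cover form: coanalytic sets covering X can be
shrunk to Borel sets still covering X. -/
theorem novikov_cover {X : Type*} [TopologicalSpace X] [PolishSpace X]
    [MeasurableSpace X] [BorelSpace X]
    (A : ℕ → Set X) (hA : ∀ n, AnalyticSet (A n)ᶜ)
    (hcover : (⋃ n, A n) = Set.univ) :
    ∃ B : ℕ → Set X, (∀ n, MeasurableSet (B n)) ∧ (∀ n, B n ⊆ A n) ∧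
      (⋃ n, B n) = Set.univ := by
  obtain ⟨D, hDm, hAD, hD⟩ := AnalyticSet.measurablySeparableFamily hA
    (by rw [← compl_iUnion, hcover, compl_univ])
  refine ⟨fun n => (D n)ᶜ, fun n => (hDm n).compl, fun n => compl_subset_comm.1 (hAD n), ?_⟩
  rw [← compl_iInter, hD, compl_empty]
end

section
/- (Hyperplane selection theorem) Let X be a Polish space, n ∈ ℕ, Y ⊆ ℝ^n a Borel set, and f : X × Y → ℝ upper semi-analytic. Suppose there exist functions b : X → ℝ^n and c : X → ℝ (not assumed measurable) with f(x,y) ≤ b(x)·y + c(x) for every x ∈ X and y ∈ Y. Then there exist Borel measurable maps B : X → ℝ^n and C : X → ℝ with f(x,y) ≤ B(x)·y + C(x) for every x ∈ X and y ∈ Y. -/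
open MeasureTheory Set Function


private def NSep {α : Type*} [MeasurableSpace α] (S : ℕ → Set α) : Prop :=
  ∃ B : ℕ → Set α, (∀ i, MeasurableSet (B i)) ∧ (∀ i, S i ⊆ B i) ∧ (⋂ i, B i) = ∅

private lemma nsep_update {α : Type*} [MeasurableSpace α] {S : ℕ → Set α} (hS : ¬ NSep S)
    (j : ℕ) {T : ℕ → Set α} (hT : S j = ⋃ k, T k) :
    ∃ k, ¬ NSep (Function.update S j (T k)) := by
  by_contra h
  push_neg at h
  apply hS
  choose B hBm hBs hBe using h
  refine ⟨fun i => if i = j then ⋃ k, B k j else ⋂ k, B k i, fun i => ?_, fun i => ?_, ?_⟩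
  · dsimp only
    split
    · exact MeasurableSet.iUnion fun k => hBm k j
    · exact MeasurableSet.iInter fun k => hBm k i
  · dsimp only
    split_ifs with hij
    · subst hij
      rw [hT]
      refine Set.iUnion_subset fun k => ?_
      refine Set.subset_iUnion_of_subset k ?_
      have := hBs k i
      rwa [Function.update_self] at this
    · refine Set.subset_iInter fun k => ?_
      have := hBs k i
      rwa [Function.update_of_ne hij] at this
  · ext x
    simp only [Set.mem_iInter, Set.mem_empty_iff_false, iff_false]
    intro hx
    have hxj := hx j
    rw [if_pos rfl] at hxj
    obtain ⟨k, hk⟩ := Set.mem_iUnion.1 hxj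
    have : x ∈ ⋂ i, B k i := by
      refine Set.mem_iInter.2 fun i => ?_
      by_cases hij : i = j
      · exact hij ▸ hk
      · have := hx i
        rw [if_neg hij] at this
        exact Set.mem_iInter.1 this k
    rw [hBe k] at this
    exact this

private theorem novikov {α : Type*} [TopologicalSpace α] [T2Space α] [MeasurableSpace α]
    [OpensMeasurableSpace α] {A : ℕ → Set α} (hA : ∀ i, AnalyticSet (A i))
    (hinter : (⋂ i, A i) = ∅) : NSep A := by
  by_cases hne : ∃ i₀, A i₀ = ∅
  · obtain ⟨i₀, h0⟩ := hne
    refine ⟨fun i => if i = i₀ then ∅ else Set.univ, fun i => ?_, fun i => ?_, ?_⟩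
    · dsimp only; split <;> simp
    · dsimp only; split_ifs with h
      · subst h; simp [h0]
      · simp
    · ext x
      simp only [Set.mem_iInter, Set.mem_empty_iff_false, iff_false]
      intro hx
      have := hx i₀
      rw [if_pos rfl] at this
      exact this
  push_neg at hne
  have hex : ∀ i, ∃ g : (ℕ → ℕ) → α, Continuous g ∧ Set.range g = A i := by
    intro i
    have := hA i
    rw [MeasureTheory.AnalyticSet] at this
    rcases this with h | h
    · exact absurd h (hne i).ne_empty
    · exact h
  choose g gcont grange using hex
  by_contra hsep
  set e : ℕ → ℕ := fun t => (Nat.unpair t).1 with he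
  -- the subtype of "bad" states
  have hbad0 : ¬ NSep (fun i => g i ''
      PiNat.cylinder (((fun _ _ => 0, fun _ => 0) :
        (ℕ → (ℕ → ℕ)) × (ℕ → ℕ)).1 i) (((fun _ _ => 0, fun _ => 0) :
        (ℕ → (ℕ → ℕ)) × (ℕ → ℕ)).2 i)) := by
    simp only [PiNat.cylinder_zero, Set.image_univ, grange]
    exact hsep
  have key : ∀ q : (ℕ → (ℕ → ℕ)) × (ℕ → ℕ),
      ¬ NSep (fun i => g i '' PiNat.cylinder (q.1 i) (q.2 i)) → ∀ j : ℕ, ∃ k : ℕ,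
      ¬ NSep (fun i => g i '' PiNat.cylinder
        ((Function.update q.1 j (Function.update (q.1 j) (q.2 j) k)) i)
        ((Function.update q.2 j (q.2 j + 1)) i)) := by
    rintro ⟨x, L⟩ hq j
    have hU : (fun i => g i '' PiNat.cylinder (x i) (L i)) j
        = ⋃ k, g j '' PiNat.cylinder (Function.update (x j) (L j) k) (L j + 1) := by
      dsimp only
      rw [← PiNat.iUnion_cylinder_update (x j) (L j), Set.image_iUnion]
    obtain ⟨k, hk⟩ := nsep_update hq j hU
    refine ⟨k, fun hcon => hk ?_⟩
    convert hcon using 1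
    funext i
    by_cases hij : i = j
    · subst hij; simp
    · simp [Function.update_of_ne hij]
  choose K hK using key
  let F : ℕ → {q : (ℕ → (ℕ → ℕ)) × (ℕ → ℕ) //
      ¬ NSep (fun i => g i '' PiNat.cylinder (q.1 i) (q.2 i))} →
      {q : (ℕ → (ℕ → ℕ)) × (ℕ → ℕ) //
      ¬ NSep (fun i => g i '' PiNat.cylinder (q.1 i) (q.2 i))} := fun t q =>
    ⟨(Function.update q.1.1 (e t) (Function.update (q.1.1 (e t)) (q.1.2 (e t)) (K q.1 q.2 (e t))),
      Function.update q.1.2 (e t) (q.1.2 (e t) + 1)), hK q.1 q.2 (e t)⟩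
  let p : ℕ → {q : (ℕ → (ℕ → ℕ)) × (ℕ → ℕ) //
      ¬ NSep (fun i => g i '' PiNat.cylinder (q.1 i) (q.2 i))} := fun t =>
    Nat.rec ⟨(fun _ _ => 0, fun _ => 0), hbad0⟩ (fun t q => F t q) t
  have pdef : ∀ t, p (t + 1) = F t (p t) := fun t => rfl
  set xs : ℕ → ℕ → (ℕ → ℕ) := fun t => (p t).1.1 with hxs
  set Ls : ℕ → ℕ → ℕ := fun t => (p t).1.2 with hLs
  have f1 : ∀ t i, i ≠ e t → xs (t + 1) i = xs t i ∧ Ls (t + 1) i = Ls t i := by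
    intro t i hi
    constructor <;>
    · simp only [hxs, hLs, pdef, F]
      rw [Function.update_of_ne hi]
  have f2x : ∀ t, xs (t + 1) (e t)
      = Function.update (xs t (e t)) (Ls t (e t)) (K (p t).1 (p t).2 (e t)) := by
    intro t
    simp only [hxs, hLs, pdef, F]
    rw [Function.update_self]
  have f2L : ∀ t, Ls (t + 1) (e t) = Ls t (e t) + 1 := by
    intro t
    simp only [hLs, pdef, F]
    rw [Function.update_self]
  have f3 : ∀ i, Monotone fun t => Ls t i := by
    intro i
    apply monotone_nat_of_le_succ
    intro t
    by_cases hi : i = e t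
    · subst hi; rw [f2L]; omega
    · rw [(f1 t i hi).2]
  have f4 : ∀ i m t t', t ≤ t' → m < Ls t i → xs t' i m = xs t i m := by
    intro i m t t' htt' hm
    induction t', htt' using Nat.le_induction with
    | base => rfl
    | succ t'' htt'' IH =>
      by_cases hi : i = e t''
      · subst hi
        rw [f2x t'']
        rw [Function.update_of_ne, IH]
        have : Ls t (e t'') ≤ Ls t'' (e t'') := f3 _ htt''
        omega
      · rw [(f1 t'' i hi).1, IH]
  have f5 : ∀ i M, ∃ t, M ≤ Ls t i := by
    intro i M
    induction M with
    | zero => exact ⟨0, Nat.zero_le _⟩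
    | succ M IH =>
      obtain ⟨t, ht⟩ := IH
      refine ⟨Nat.pair i t + 1, ?_⟩
      have he' : e (Nat.pair i t) = i := by simp [he]
      have h1 : Ls (Nat.pair i t + 1) i = Ls (Nat.pair i t) i + 1 := by
        have := f2L (Nat.pair i t)
        rwa [he'] at this
      have h2 : Ls t i ≤ Ls (Nat.pair i t) i := f3 i (Nat.right_le_pair i t)
      omega
  have hz : ∀ i m, ∃ t, m < Ls t i := fun i m => f5 i (m + 1)
  choose st hst using hz
  set z : ℕ → (ℕ → ℕ) := fun i m => xs (st i m) i m with hzdef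
  have f7 : ∀ t i, z i ∈ PiNat.cylinder (xs t i) (Ls t i) := by
    intro t i
    rw [PiNat.mem_cylinder_iff]
    intro m hm
    have h1 : xs (max t (st i m)) i m = xs t i m := f4 i m t _ (le_max_left _ _) hm
    have h2 : xs (max t (st i m)) i m = xs (st i m) i m :=
      f4 i m (st i m) _ (le_max_right _ _) (hst i m)
    simp only [hzdef]
    rw [← h2, h1]
  set a : ℕ → α := fun i => g i (z i) with hadef
  have f8 : ∀ i i', a i = a i' := by
    intro i i'
    by_contra hne'
    have hii' : i ≠ i' := fun h => hne' (by rw [h])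
    obtain ⟨u, v, u_open, v_open, hau, hav, huv⟩ := t2_separation hne'
    letI : MetricSpace (ℕ → ℕ) := PiNat.metricSpaceNatNat
    obtain ⟨εu, εupos, hεu⟩ : ∃ ε : ℝ, ε > 0 ∧ Metric.ball (z i) ε ⊆ g i ⁻¹' u :=
      Metric.mem_nhds_iff.1 ((gcont i).continuousAt.preimage_mem_nhds (u_open.mem_nhds hau))
    obtain ⟨εv, εvpos, hεv⟩ : ∃ ε : ℝ, ε > 0 ∧ Metric.ball (z i') ε ⊆ g i' ⁻¹' v :=
      Metric.mem_nhds_iff.1 ((gcont i').continuousAt.preimage_mem_nhds (v_open.mem_nhds hav))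
    obtain ⟨N, hN⟩ : ∃ N : ℕ, (1 / 2 : ℝ) ^ N < min εu εv :=
      exists_pow_lt_of_lt_one (lt_min εupos εvpos) (by norm_num)
    obtain ⟨t1, ht1⟩ := f5 i N
    obtain ⟨t2, ht2⟩ := f5 i' N
    set t := max t1 t2 with htdef
    have hLi : N ≤ Ls t i := le_trans ht1 (f3 i (le_max_left _ _))
    have hLi' : N ≤ Ls t i' := le_trans ht2 (f3 i' (le_max_right _ _))
    have himu : g i '' PiNat.cylinder (xs t i) (Ls t i) ⊆ u := by
      rw [Set.image_subset_iff]
      intro w hw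
      apply hεu
      rw [Metric.mem_ball]
      have hw' : w ∈ PiNat.cylinder (z i) N := by
        rw [PiNat.mem_cylinder_iff]
        intro m hm
        have h1 : w m = xs t i m := PiNat.mem_cylinder_iff.1 hw m (lt_of_lt_of_le hm hLi)
        have h2 : z i m = xs t i m := PiNat.mem_cylinder_iff.1 (f7 t i) m (lt_of_lt_of_le hm hLi)
        rw [h1, h2]
      calc dist w (z i) ≤ (1 / 2) ^ N := PiNat.mem_cylinder_iff_dist_le.1 hw'
        _ < min εu εv := hN
        _ ≤ εu := min_le_left _ _
    have himv : g i' '' PiNat.cylinder (xs t i') (Ls t i') ⊆ v := by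
      rw [Set.image_subset_iff]
      intro w hw
      apply hεv
      rw [Metric.mem_ball]
      have hw' : w ∈ PiNat.cylinder (z i') N := by
        rw [PiNat.mem_cylinder_iff]
        intro m hm
        have h1 : w m = xs t i' m := PiNat.mem_cylinder_iff.1 hw m (lt_of_lt_of_le hm hLi')
        have h2 : z i' m = xs t i' m :=
          PiNat.mem_cylinder_iff.1 (f7 t i') m (lt_of_lt_of_le hm hLi')
        rw [h1, h2]
      calc dist w (z i') ≤ (1 / 2) ^ N := PiNat.mem_cylinder_iff_dist_le.1 hw'
        _ < min εu εv := hN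
        _ ≤ εv := min_le_right _ _
    apply (p t).2
    refine ⟨fun l => if l = i then u else if l = i' then v else Set.univ, fun l => ?_,
      fun l => ?_, ?_⟩
    · dsimp only; split_ifs
      · exact u_open.measurableSet
      · exact v_open.measurableSet
      · exact MeasurableSet.univ
    · dsimp only; split_ifs with h1 h2
      · subst h1; exact himu
      · subst h2; exact himv
      · exact Set.subset_univ _
    · ext w
      simp only [Set.mem_iInter, Set.mem_empty_iff_false, iff_false]
      intro hw
      have h1 := hw i
      rw [if_pos rfl] at h1
      have h2 := hw i'
      rw [if_neg (Ne.symm hii'), if_pos rfl] at h2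
      exact Set.disjoint_left.1 huv h1 h2
  have : a 0 ∈ ⋂ i, A i := by
    refine Set.mem_iInter.2 fun i => ?_
    rw [← grange i]
    rw [f8 0 i]
    exact Set.mem_range_self _
  rw [hinter] at this
  exact this


private lemma tk_analytic {X : Type*} [TopologicalSpace X] [PolishSpace X] [MeasurableSpace X]
    [BorelSpace X] {n : ℕ} (Y : Set (Fin n → ℝ)) (f : X → (Fin n → ℝ) → ℝ)
    (husa : ∀ γ : ℝ, AnalyticSet {p : X × (Fin n → ℝ) | p.2 ∈ Y ∧ γ < f p.1 p.2})
    (z₀ : (Fin n → ℝ) × ℝ) (r : ℝ) :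
    AnalyticSet {x : X | ∀ z ∈ Metric.closedBall z₀ r,
      ∃ y ∈ Y, (∑ i, z.1 i * y i) + z.2 < f x y} := by
  classical
  set K := Metric.closedBall z₀ r with hKdef
  have hKcomp : IsCompact K := by
    rw [hKdef, ← closedBall_prod_same]
    exact (isCompact_closedBall _ _).prod (isCompact_closedBall _ _)
  set L : (Fin n → ℝ) → (Fin n → ℝ) × ℝ → ℝ := fun y z => (∑ i, z.1 i * y i) + z.2 with hLdef
  have Lcont : Continuous fun w : ((Fin n → ℝ) × ℝ) × (Fin n → ℝ) => L w.2 w.1 := by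
    apply Continuous.add
    · apply continuous_finset_sum
      intro i _
      exact (((continuous_apply i).comp (continuous_fst.comp continuous_fst))).mul
        ((continuous_apply i).comp continuous_snd)
    · exact continuous_snd.comp continuous_fst
  have key : {x : X | ∀ z ∈ K, ∃ y ∈ Y, L y z < f x y}
      = ⋃ (pq : Σ p : ℕ, Fin p → ℚ),
        Prod.fst '' {w : X × (Fin pq.1 → (Fin n → ℝ)) |
          (∀ i, w.2 i ∈ Y ∧ ((pq.2 i : ℝ) < f w.1 (w.2 i))) ∧
          ∀ z ∈ K, ∃ i, L (w.2 i) z < (pq.2 i : ℝ)} := by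
    ext x
    simp only [Set.mem_setOf_eq, Set.mem_iUnion]
    constructor
    · intro hx
      set U : (Fin n → ℝ) × ℚ → Set ((Fin n → ℝ) × ℝ) := fun yq =>
        if yq.1 ∈ Y ∧ (yq.2 : ℝ) < f x yq.1 then {z | L yq.1 z < (yq.2 : ℝ)} else ∅ with hU
      have hUopen : ∀ yq, IsOpen (U yq) := by
        intro yq
        rw [hU]
        dsimp only
        split_ifs
        · exact isOpen_lt (Lcont.comp (continuous_id.prodMk continuous_const)) continuous_const
        · exact isOpen_empty
      have hcover : K ⊆ ⋃ yq, U yq := by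
        intro z hz
        obtain ⟨y, hy, hlt⟩ := hx z hz
        obtain ⟨q, hq1, hq2⟩ := exists_rat_btwn hlt
        refine Set.mem_iUnion.2 ⟨(y, q), ?_⟩
        rw [hU]
        dsimp only
        rw [if_pos ⟨hy, hq2⟩]
        exact hq1
      obtain ⟨t, ht⟩ := hKcomp.elim_finite_subcover U hUopen hcover
      set t' := t.filter (fun yq => yq.1 ∈ Y ∧ (yq.2 : ℝ) < f x yq.1) with ht'
      set p := t'.card with hp
      set eqv := t'.equivFin with heqv
      refine ⟨⟨p, fun i => (eqv.symm i).1.2⟩, (x, fun i => (eqv.symm i).1.1), ⟨?_, ?_⟩, rfl⟩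
      · intro i
        exact (Finset.mem_filter.mp (eqv.symm i).2).2
      · intro z hz
        obtain ⟨yq, hyqt, hzU⟩ := Set.mem_iUnion₂.1 (ht hz)
        have hcond : yq.1 ∈ Y ∧ (yq.2 : ℝ) < f x yq.1 := by
          by_contra hcon
          rw [hU] at hzU
          dsimp only at hzU
          rw [if_neg hcon] at hzU
          exact hzU
        have hyqt' : yq ∈ t' := Finset.mem_filter.mpr ⟨hyqt, hcond⟩
        refine ⟨eqv ⟨yq, hyqt'⟩, ?_⟩
        have hz' : z ∈ {z | L yq.1 z < (yq.2 : ℝ)} := by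
          rw [hU] at hzU; dsimp only at hzU; rwa [if_pos hcond] at hzU
        simpa using hz'
    · rintro ⟨⟨p, q⟩, ⟨w, ⟨hw1, hw2⟩, hwx⟩⟩
      intro z hz
      obtain ⟨i, hi⟩ := hw2 z hz
      exact ⟨w.2 i, (hw1 i).1, by
        calc L (w.2 i) z < (q i : ℝ) := hi
          _ < f w.1 (w.2 i) := (hw1 i).2
          _ = f x (w.2 i) := by rw [hwx]⟩
  rw [key]
  apply AnalyticSet.iUnion
  rintro ⟨p, q⟩
  apply AnalyticSet.image_of_continuous _ continuous_fst
  have hEq : {w : X × (Fin p → (Fin n → ℝ)) |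
      (∀ i, w.2 i ∈ Y ∧ ((q i : ℝ) < f w.1 (w.2 i))) ∧
      ∀ z ∈ K, ∃ i, L (w.2 i) z < (q i : ℝ)}
      = ⋂ o : Option (Fin p), (fun o => Option.elim o
          {w : X × (Fin p → (Fin n → ℝ)) | ∀ z ∈ K, ∃ i, L (w.2 i) z < (q i : ℝ)}
          (fun i => (fun w : X × (Fin p → (Fin n → ℝ)) => (w.1, w.2 i)) ⁻¹'
            {p' : X × (Fin n → ℝ) | p'.2 ∈ Y ∧ (q i : ℝ) < f p'.1 p'.2})) o := by
    ext w
    simp only [Set.mem_iInter, Option.forall, Option.elim, Set.mem_setOf_eq, Set.mem_preimage]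
    tauto
  rw [hEq]
  apply AnalyticSet.iInter
  rintro (_ | i)
  · -- the cover condition set: open in the second coordinate
    have hWopen : IsOpen {v : Fin p → (Fin n → ℝ) | ∀ z ∈ K, ∃ i, L (v i) z < (q i : ℝ)} := by
      rw [← isClosed_compl_iff]
      have hcompl : {v : Fin p → (Fin n → ℝ) | ∀ z ∈ K, ∃ i, L (v i) z < (q i : ℝ)}ᶜ
          = Prod.snd '' {zv : K × (Fin p → (Fin n → ℝ)) |
              ∀ i, (q i : ℝ) ≤ L (zv.2 i) (zv.1 : (Fin n → ℝ) × ℝ)} := by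
        ext v
        simp only [Set.mem_compl_iff, Set.mem_setOf_eq, Set.mem_image, not_forall, not_exists,
          not_lt, Classical.not_imp]
        constructor
        · rintro ⟨z, hzK, hz⟩
          exact ⟨(⟨z, hzK⟩, v), hz, rfl⟩
        · rintro ⟨⟨⟨z, hzK⟩, v'⟩, hv', rfl⟩
          exact ⟨z, hzK, hv'⟩
      rw [hcompl]
      haveI : CompactSpace K := isCompact_iff_compactSpace.mp hKcomp
      apply isClosedMap_snd_of_compactSpace
      have hS : {zv : K × (Fin p → (Fin n → ℝ)) |
          ∀ i, (q i : ℝ) ≤ L (zv.2 i) (zv.1 : (Fin n → ℝ) × ℝ)}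
          = ⋂ i, {zv : K × (Fin p → (Fin n → ℝ)) |
              (q i : ℝ) ≤ L (zv.2 i) (zv.1 : (Fin n → ℝ) × ℝ)} := by
        ext zv
        simp [Set.mem_iInter]
      rw [hS]
      exact isClosed_iInter fun i => isClosed_le continuous_const
        (Lcont.comp ((continuous_subtype_val.comp continuous_fst).prodMk
          ((continuous_apply i).comp continuous_snd)))
    exact ((hWopen.preimage (continuous_snd :
      Continuous fun w : X × (Fin p → (Fin n → ℝ)) => w.2)).measurableSet).analyticSet
  · exact (husa (q i)).preimage
      (continuous_fst.prodMk ((continuous_apply i).comp continuous_snd))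


private lemma analyticSet_inter' {a : Type*} [TopologicalSpace a] [T2Space a] {s t : Set a}
    (hs : AnalyticSet s) (ht : AnalyticSet t) : AnalyticSet (s ∩ t) := by
  have h : s ∩ t = ⋂ b : Bool, cond b s t := by
    ext x
    simp [Set.mem_iInter, Bool.forall_bool, and_comm]
  rw [h]
  exact AnalyticSet.iInter fun b => by cases b <;> simpa

private lemma exists_meas_selector {X : Type*} [MeasurableSpace X] {E : ℕ → Set X}
    (hEm : ∀ j, MeasurableSet (E j)) (hex : ∀ x, ∃ j, x ∉ E j) :
    ∃ σ : X → ℕ, Measurable σ ∧ ∀ x, x ∉ E (σ x) := by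
  classical
  refine ⟨fun x => Nat.find (hex x), ?_, fun x => Nat.find_spec (hex x)⟩
  apply measurable_to_countable'
  intro j
  have h : (fun x => Nat.find (hex x)) ⁻¹' {j} = (E j)ᶜ ∩ ⋂ m ∈ Finset.range j, E m := by
    ext x
    simp only [Set.mem_preimage, Set.mem_singleton_iff, Nat.find_eq_iff, Set.mem_inter_iff,
      Set.mem_compl_iff, Set.mem_iInter, not_not, Finset.mem_range]
  rw [h]
  exact ((hEm j).compl).inter (MeasurableSet.biInter (Set.to_countable _) fun m _ => hEm m)


/-- Hyperplane selection theorem: an upper semi-analytic function on X × Y (Y ⊆ ℝⁿ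
Borel) admitting a pointwise affine domination admits a Borel measurable one. -/
theorem hyperplane_selection {X : Type*} [TopologicalSpace X] [PolishSpace X]
    [MeasurableSpace X] [BorelSpace X]
    {n : ℕ} (Y : Set (Fin n → ℝ)) (hY : MeasurableSet Y)
    (f : X → (Fin n → ℝ) → ℝ)
    (husa : ∀ γ : ℝ, AnalyticSet {p : X × (Fin n → ℝ) | p.2 ∈ Y ∧ γ < f p.1 p.2})
    (b : X → Fin n → ℝ) (c : X → ℝ)
    (hdom : ∀ x, ∀ y ∈ Y, f x y ≤ (∑ i, b x i * y i) + c x) :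
    ∃ (B : X → Fin n → ℝ) (C : X → ℝ), Measurable B ∧ Measurable C ∧
      ∀ x, ∀ y ∈ Y, f x y ≤ (∑ i, B x i * y i) + C x := by
  classical
  -- the set of affine dominators of `f x` on `Y`
  set D : X → Set ((Fin n → ℝ) × ℝ) :=
    fun x => {z | ∀ y ∈ Y, f x y ≤ (∑ i, z.1 i * y i) + z.2} with hD
  have hDclosed : ∀ x, IsClosed (D x) := by
    intro x
    have h : D x = ⋂ y ∈ Y, {z : (Fin n → ℝ) × ℝ | f x y ≤ (∑ i, z.1 i * y i) + z.2} := by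
      ext z
      simp [hD, Set.mem_iInter]
    rw [h]
    refine isClosed_biInter fun y hy => isClosed_le continuous_const ?_
    exact (continuous_finset_sum _ fun i _ =>
      ((continuous_apply i).comp continuous_fst).mul continuous_const).add continuous_snd
  -- the analytic "fully covered ball" sets
  set T : ((Fin n → ℝ) × ℝ) → ℝ → Set X := fun z₀ r =>
    {x | ∀ z ∈ Metric.closedBall z₀ r, ∃ y ∈ Y, (∑ i, z.1 i * y i) + z.2 < f x y} with hTdef
  have hT : ∀ z₀ r, AnalyticSet (T z₀ r) := fun z₀ r => tk_analytic Y f husa z₀ r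
  have hTmem : ∀ z₀ r (x : X), x ∉ T z₀ r ↔ ∃ z ∈ Metric.closedBall z₀ r, z ∈ D x := by
    intro z₀ r x
    rw [hTdef]
    simp only [Set.mem_setOf_eq, not_forall]
    constructor
    · intro h
      push_neg at h
      obtain ⟨z, hz1, hz2⟩ := h
      exact ⟨z, hz1, fun y hy => hz2 y hy⟩
    · rintro ⟨z, hz1, hz2⟩
      refine ⟨z, ?_⟩
      push_neg
      exact ⟨hz1, fun y hy => hz2 y hy⟩
  -- a dense sequence
  set u : ℕ → (Fin n → ℝ) × ℝ := TopologicalSpace.denseSeq _ with hu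
  have hudense : DenseRange u := TopologicalSpace.denseRange_denseSeq _
  have hud : ∀ (z : (Fin n → ℝ) × ℝ) (ε : ℝ), 0 < ε → ∃ j, dist z (u j) ≤ ε := by
    intro z ε hε
    obtain ⟨j, hj⟩ := Metric.denseRange_iff.1 hudense z ε hε
    exact ⟨j, hj.le⟩
  -- base step
  have base : ∃ φ : X → ℕ, Measurable φ ∧
      ∀ x, ∃ z ∈ Metric.closedBall (u (φ x)) ((1/2 : ℝ) ^ 0), z ∈ D x := by
    have hGe : (⋂ j, T (u j) ((1/2 : ℝ) ^ 0)) = ∅ := by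
      ext x
      simp only [Set.mem_iInter, Set.mem_empty_iff_false, iff_false]
      intro hx
      obtain ⟨j, hj⟩ := hud (b x, c x) ((1/2 : ℝ) ^ 0) (by norm_num)
      obtain ⟨y, hy, hlt⟩ := hx j (b x, c x) (Metric.mem_closedBall.2 hj)
      exact (hdom x y hy).not_gt hlt
    obtain ⟨E, hEm, hEs, hEe⟩ := novikov (fun j => hT (u j) ((1/2 : ℝ) ^ 0)) hGe
    have hex : ∀ x, ∃ j, x ∉ E j := by
      intro x
      by_contra hcon
      push_neg at hcon
      have hmem : x ∈ ⋂ j, E j := Set.mem_iInter.2 hcon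
      rw [hEe] at hmem
      exact hmem
    obtain ⟨σ, hσm, hσ⟩ := exists_meas_selector hEm hex
    refine ⟨σ, hσm, fun x => ?_⟩
    exact (hTmem _ _ x).1 fun h => hσ x (hEs _ h)
  -- inductive step
  have step : ∀ (t : ℕ) (φ : X → ℕ), Measurable φ →
      (∀ x, ∃ z ∈ Metric.closedBall (u (φ x)) ((1/2 : ℝ) ^ t), z ∈ D x) →
      ∃ ψ : X → ℕ, Measurable ψ ∧
        (∀ x, ∃ z ∈ Metric.closedBall (u (ψ x)) ((1/2 : ℝ) ^ (t+1)), z ∈ D x) ∧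
        ∀ x, dist (u (ψ x)) (u (φ x)) ≤ 3 * (1/2 : ℝ) ^ (t+1) := by
    intro t φ hφm hφinv
    have hper : ∀ k₀ : ℕ, ∃ ψ₀ : X → ℕ, Measurable ψ₀ ∧ ∀ x, φ x = k₀ →
        dist (u (ψ₀ x)) (u k₀) ≤ 3 * (1/2 : ℝ) ^ (t+1) ∧
        ∃ z ∈ Metric.closedBall (u (ψ₀ x)) ((1/2 : ℝ) ^ (t+1)), z ∈ D x := by
      intro k₀
      set G : ℕ → Set X := fun j =>
        if dist (u j) (u k₀) ≤ 3 * (1/2 : ℝ) ^ (t+1)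
          then T (u j) ((1/2 : ℝ) ^ (t+1)) ∩ φ ⁻¹' {k₀}
          else φ ⁻¹' {k₀} with hG
      have hGa : ∀ j, AnalyticSet (G j) := by
        intro j
        rw [hG]
        dsimp only
        split_ifs
        · exact analyticSet_inter' (hT _ _) (hφm (measurableSet_singleton k₀)).analyticSet
        · exact (hφm (measurableSet_singleton k₀)).analyticSet
      have hGe : (⋂ j, G j) = ∅ := by
        ext x
        simp only [Set.mem_iInter, Set.mem_empty_iff_false, iff_false]
        intro hx
        have hfib : φ x = k₀ := by
          have h0 := hx 0
          rw [hG] at h0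
          dsimp only at h0
          split_ifs at h0 with hc
          · exact h0.2
          · exact h0
        obtain ⟨z, hz1, hz2⟩ := hφinv x
        rw [hfib] at hz1
        obtain ⟨j, hj⟩ := hud z ((1/2 : ℝ) ^ (t+1)) (by positivity)
        have hnear : dist (u j) (u k₀) ≤ 3 * (1/2 : ℝ) ^ (t+1) := by
          calc dist (u j) (u k₀) ≤ dist (u j) z + dist z (u k₀) := dist_triangle _ _ _
            _ ≤ (1/2 : ℝ) ^ (t+1) + (1/2 : ℝ) ^ t := by
                gcongr
                · rw [dist_comm]; exact hj
                · exact Metric.mem_closedBall.1 hz1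
            _ = 3 * (1/2 : ℝ) ^ (t+1) := by ring
        have hxj := hx j
        rw [hG] at hxj
        dsimp only at hxj
        rw [if_pos hnear] at hxj
        obtain ⟨y, hy, hlt⟩ := hxj.1 z (Metric.mem_closedBall.2 hj)
        exact (hz2 y hy).not_gt hlt
      obtain ⟨E, hEm, hEs, hEe⟩ := novikov hGa hGe
      have hex : ∀ x, ∃ j, x ∉ E j := by
        intro x
        by_contra hcon
        push_neg at hcon
        have hmem : x ∈ ⋂ j, E j := Set.mem_iInter.2 hcon
        rw [hEe] at hmem
        exact hmem
      obtain ⟨σ, hσm, hσ⟩ := exists_meas_selector hEm hex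
      refine ⟨σ, hσm, fun x hfib => ?_⟩
      have hnotG : x ∉ G (σ x) := fun h => hσ x (hEs _ h)
      rw [hG] at hnotG
      dsimp only at hnotG
      by_cases hnear : dist (u (σ x)) (u k₀) ≤ 3 * (1/2 : ℝ) ^ (t+1)
      · rw [if_pos hnear] at hnotG
        refine ⟨hnear, ?_⟩
        have hxnT : x ∉ T (u (σ x)) ((1/2 : ℝ) ^ (t+1)) := fun h => hnotG ⟨h, hfib⟩
        exact (hTmem _ _ x).1 hxnT
      · rw [if_neg hnear] at hnotG
        exact absurd hfib hnotG
    choose ψ₀ hψ₀m hψ₀ using hper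
    refine ⟨fun x => ψ₀ (φ x) x, ?_, fun x => (hψ₀ (φ x) x rfl).2, fun x => (hψ₀ (φ x) x rfl).1⟩
    apply measurable_to_countable'
    intro j
    have h : (fun x => ψ₀ (φ x) x) ⁻¹' {j} = ⋃ k₀, (φ ⁻¹' {k₀} ∩ ψ₀ k₀ ⁻¹' {j}) := by
      ext x
      simp only [Set.mem_preimage, Set.mem_singleton_iff, Set.mem_iUnion, Set.mem_inter_iff]
      constructor
      · intro hxx
        exact ⟨φ x, rfl, hxx⟩
      · rintro ⟨k₀, hk, hxx⟩
        rw [hk]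
        exact hxx
    rw [h]
    exact MeasurableSet.iUnion fun k₀ =>
      (hφm (measurableSet_singleton _)).inter (hψ₀m k₀ (measurableSet_singleton _))
  -- iterate
  obtain ⟨φ0, hφ0m, hφ0inv⟩ := base
  have step' : ∀ (t : ℕ)
      (φp : {φ : X → ℕ // Measurable φ ∧
        ∀ x, ∃ z ∈ Metric.closedBall (u (φ x)) ((1/2 : ℝ) ^ t), z ∈ D x}),
      ∃ ψp : {ψ : X → ℕ // Measurable ψ ∧
        ∀ x, ∃ z ∈ Metric.closedBall (u (ψ x)) ((1/2 : ℝ) ^ (t+1)), z ∈ D x},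
      ∀ x, dist (u (ψp.1 x)) (u (φp.1 x)) ≤ 3 * (1/2 : ℝ) ^ (t+1) := by
    rintro t ⟨φ, hφm, hφinv⟩
    obtain ⟨ψ, h1, h2, h3⟩ := step t φ hφm hφinv
    exact ⟨⟨ψ, h1, h2⟩, h3⟩
  choose nxt hnxt using step'
  set Φ : ∀ t : ℕ, {φ : X → ℕ // Measurable φ ∧
      ∀ x, ∃ z ∈ Metric.closedBall (u (φ x)) ((1/2 : ℝ) ^ t), z ∈ D x} :=
    fun t => Nat.rec ⟨φ0, hφ0m, hφ0inv⟩ (fun t q => nxt t q) t with hΦ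
  have Φdef : ∀ t, Φ (t+1) = nxt t (Φ t) := fun t => rfl
  have hdrift : ∀ t x, dist (u ((Φ (t+1)).1 x)) (u ((Φ t).1 x)) ≤ 3 * (1/2 : ℝ) ^ (t+1) := by
    intro t x
    rw [Φdef t]
    exact hnxt t (Φ t) x
  have hcauchy : ∀ x, CauchySeq fun t => u ((Φ t).1 x) := by
    intro x
    apply cauchySeq_of_le_geometric (1/2 : ℝ) (3/2) (by norm_num)
    intro t
    calc dist (u ((Φ t).1 x)) (u ((Φ (t+1)).1 x))
        = dist (u ((Φ (t+1)).1 x)) (u ((Φ t).1 x)) := dist_comm _ _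
      _ ≤ 3 * (1/2 : ℝ) ^ (t+1) := hdrift t x
      _ = 3/2 * (1/2 : ℝ) ^ t := by ring
  have hFex : ∀ x, ∃ zlim, Filter.Tendsto (fun t => u ((Φ t).1 x)) Filter.atTop (nhds zlim) :=
    fun x => cauchySeq_tendsto_of_complete (hcauchy x)
  choose F hF using hFex
  have hFmeas : Measurable F := by
    apply measurable_of_tendsto_metrizable (f := fun t x => u ((Φ t).1 x))
    · intro t
      exact measurable_from_top.comp (Φ t).2.1
    · rw [tendsto_pi_nhds]
      exact hF
  have hFD : ∀ x, F x ∈ D x := by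
    intro x
    choose zw hz1 hz2 using fun t => (Φ t).2.2 x
    have hzt : Filter.Tendsto zw Filter.atTop (nhds (F x)) := by
      rw [tendsto_iff_dist_tendsto_zero]
      apply squeeze_zero (fun t => dist_nonneg)
        (g := fun t => (1/2 : ℝ) ^ t + dist (u ((Φ t).1 x)) (F x))
      · intro t
        calc dist (zw t) (F x)
            ≤ dist (zw t) (u ((Φ t).1 x)) + dist (u ((Φ t).1 x)) (F x) := dist_triangle _ _ _
          _ ≤ (1/2 : ℝ) ^ t + dist (u ((Φ t).1 x)) (F x) := by
              gcongr
              exact Metric.mem_closedBall.1 (hz1 t)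
      · have h1 : Filter.Tendsto (fun t : ℕ => (1/2 : ℝ) ^ t) Filter.atTop (nhds 0) :=
          tendsto_pow_atTop_nhds_zero_of_lt_one (by norm_num) (by norm_num)
        have h2 : Filter.Tendsto (fun t => dist (u ((Φ t).1 x)) (F x)) Filter.atTop (nhds 0) :=
          tendsto_iff_dist_tendsto_zero.1 (hF x)
        simpa using h1.add h2
    exact (hDclosed x).mem_of_tendsto hzt (Filter.Eventually.of_forall hz2)
  exact ⟨fun x => (F x).1, fun x => (F x).2, measurable_fst.comp hFmeas,
    measurable_snd.comp hFmeas, fun x y hy => hFD x y hy⟩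
end

section
/- (Hyperplane selection, n = 1 case) Let X be a Polish space and f : X × ℝ → ℝ upper semi-analytic. Suppose there exist b, c : X → ℝ with f(x,y) ≤ b(x)·y + c(x) for all x ∈ X, y ∈ ℝ. Then there exist Borel measurable B, C : X → ℝ with f(x,y) ≤ B(x)·y + C(x) for all x ∈ X, y ∈ ℝ. -/
/-!
Choose the intercept first and the slope second. For `n : ℕ`, the set `D n` of those `x` for
which no line through `(0, n)` lies above `f x` is analytic, because a line through `(0, n)` of
real slope lies above `f x` iff every line through `(0, n)` of rational slope lies above `f x` on
one of the two half-lines. Every `x` leaves `D n` for large `n`, so Novikov's separation theorem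
gives Borel hulls of the `D n` with empty intersection, and the first index outside the hulls is a
Borel intercept `C`. Given `C`, the supremum `U x` of the slopes `(f x y - C x) / y` over `y > 0`
is upper semi-analytic, the infimum `L x` over `y < 0` is lower semi-analytic, and `U ≤ L`;
separating `{q < U}` from `{L < q}` by Lusin's separation theorem for every rational `q` yields a
Borel slope between them.
-/

open MeasureTheory Set Function Topology

section Slopes

variable (φ : ℝ → ℝ) (c : ℝ)

def rightSlopes : Set ℝ := (fun y => (φ y - c) / y) '' Ioi 0

def leftSlopes : Set ℝ := (fun y => (φ y - c) / y) '' Iio 0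

variable {φ c}

lemma rightSlopes_nonempty : (rightSlopes φ c).Nonempty := (nonempty_Ioi (a := 0)).image _

lemma leftSlopes_nonempty : (leftSlopes φ c).Nonempty := (nonempty_Iio (a := 0)).image _

lemma mem_upperBounds_rightSlopes {m : ℝ} :
    m ∈ upperBounds (rightSlopes φ c) ↔ ∀ y > 0, φ y ≤ m * y + c := by
  simp only [rightSlopes, forall_mem_image, mem_upperBounds, mem_Ioi]
  refine forall₂_congr fun y hy => ?_
  rw [div_le_iff₀ hy]
  constructor <;> intro h <;> linarith

lemma mem_lowerBounds_leftSlopes {m : ℝ} :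
    m ∈ lowerBounds (leftSlopes φ c) ↔ ∀ y < 0, φ y ≤ m * y + c := by
  simp only [leftSlopes, forall_mem_image, mem_lowerBounds, mem_Iio]
  refine forall₂_congr fun y hy => ?_
  rw [le_div_iff_of_neg hy]
  constructor <;> intro h <;> linarith

lemma forall_le_mul_add_iff {m : ℝ} :
    (∀ y, φ y ≤ m * y + c) ↔
      φ 0 ≤ c ∧ m ∈ upperBounds (rightSlopes φ c) ∧ m ∈ lowerBounds (leftSlopes φ c) := by
  rw [mem_upperBounds_rightSlopes, mem_lowerBounds_leftSlopes]
  refine ⟨fun h => ⟨by simpa using h 0, fun y _ => h y, fun y _ => h y⟩, ?_⟩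
  rintro ⟨h0, hpos, hneg⟩ y
  rcases lt_trichotomy y 0 with hy | rfl | hy
  · exact hneg y hy
  · simpa using h0
  · exact hpos y hy

lemma lt_sSup_rightSlopes_iff (hbdd : BddAbove (rightSlopes φ c)) {q : ℝ} :
    q < sSup (rightSlopes φ c) ↔ ∃ y > 0, q * y + c < φ y := by
  rw [← not_le, csSup_le_iff hbdd rightSlopes_nonempty, ← mem_upperBounds,
    mem_upperBounds_rightSlopes]
  push Not
  rfl

lemma sInf_leftSlopes_lt_iff (hbdd : BddBelow (leftSlopes φ c)) {q : ℝ} :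
    sInf (leftSlopes φ c) < q ↔ ∃ y < 0, q * y + c < φ y := by
  rw [← not_le, le_csInf_iff hbdd leftSlopes_nonempty, ← mem_lowerBounds,
    mem_lowerBounds_leftSlopes]
  push Not
  rfl

/-- The rational form on the right exhibits the set of `x` for which `f x` has no affine majorant
with intercept `c` as an analytic set. -/
lemma exists_forall_le_mul_add_iff :
    (∃ m, ∀ y, φ y ≤ m * y + c) ↔
      φ 0 ≤ c ∧ ∀ q : ℚ, (∀ y > 0, φ y ≤ q * y + c) ∨ (∀ y < 0, φ y ≤ q * y + c) := by
  constructor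
  · rintro ⟨m, hm⟩
    refine ⟨by simpa using hm 0, fun q => ?_⟩
    rcases le_total m q with hmq | hqm
    · exact Or.inl fun y hy => (hm y).trans (by gcongr)
    · exact Or.inr fun y hy => (hm y).trans (by nlinarith)
  · rintro ⟨h0, hq⟩
    have hsep : ∀ s ∈ rightSlopes φ c, ∀ s' ∈ leftSlopes φ c, s ≤ s' := by
      intro s hs s' hs'
      by_contra! hlt
      obtain ⟨q, hs'q, hqs⟩ := exists_rat_btwn hlt
      rcases hq q with hright | hleft
      · exact (mem_upperBounds_rightSlopes.2 hright hs).not_gt hqs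
      · exact (mem_lowerBounds_leftSlopes.2 hleft hs').not_gt hs'q
    obtain ⟨s', hs'⟩ := leftSlopes_nonempty (φ := φ) (c := c)
    refine ⟨sSup (rightSlopes φ c), forall_le_mul_add_iff.2 ⟨h0, fun s hs => ?_, fun s' hs' => ?_⟩⟩
    · exact le_csSup ⟨s', fun s hs => hsep s hs s' hs'⟩ hs
    · exact csSup_le rightSlopes_nonempty fun s hs => hsep s hs s' hs'

end Slopes

namespace PiNat

variable {E : ℕ → Type*}

lemma exists_cylinder_subset_of_mem_nhds [∀ n, TopologicalSpace (E n)]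
    [∀ n, DiscreteTopology (E n)] {x : ∀ n, E n} {s : Set (∀ n, E n)} (hs : s ∈ 𝓝 x) :
    ∃ n, cylinder x n ⊆ s := by
  obtain ⟨_, ⟨y, n, rfl⟩, hx, hsub⟩ := (isTopologicalBasis_cylinders E).mem_nhds_iff.1 hs
  exact ⟨n, by rwa [mem_cylinder_iff_eq.1 hx]⟩

lemma exists_forall_mem_cylinder {x : ℕ → ∀ n, E n} {N : ℕ → ℕ}
    (hanti : Antitone fun t => cylinder (x t) (N t)) (hN : ∀ j, ∃ t, j < N t) :
    ∃ z, ∀ t, z ∈ cylinder (x t) (N t) := by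
  choose T hT using hN
  refine ⟨fun j => x (T j) j, fun t => mem_cylinder_iff.2 fun j hj => ?_⟩
  rcases le_total t (T j) with htT | hTt
  · exact mem_cylinder_iff.1 (hanti htT (self_mem_cylinder _ _)) j hj
  · exact (mem_cylinder_iff.1 (hanti hTt (self_mem_cylinder _ _)) j (hT j)).symm

lemma exists_forall_mem_cylinder_of_refine {β : Type*} (P : (ℕ → ℕ → β) → (ℕ → ℕ) → Prop)
    {x₀ : ℕ → ℕ → β} (h₀ : P x₀ 0)
    (hP : ∀ x N, P x N → ∀ m, ∃ x' : ℕ → ℕ → β,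
      (∀ i, x' i ∈ cylinder (x i) (N i)) ∧ P x' (update N m (N m + 1))) :
    ∃ z : ℕ → ℕ → β, ∀ n, ∃ x N, P x N ∧ (∀ i ≤ n, n ≤ N i) ∧
      ∀ i, z i ∈ cylinder (x i) (N i) := by
  let S := {q : (ℕ → ℕ → β) × (ℕ → ℕ) // P q.1 q.2}
  choose F hF hPF using fun (q : S) m => hP q.1.1 q.1.2 q.2 m
  -- step `t` refines coordinate `e t`, and `e` takes every value infinitely often
  let e t := (Nat.unpair t).1
  let seq : ℕ → S := fun t => Nat.rec ⟨(x₀, 0), h₀⟩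
    (fun t q => ⟨(F q (e t), update q.1.2 (e t) (q.1.2 (e t) + 1)), hPF q _⟩) t
  let x t := (seq t).1.1
  let N t := (seq t).1.2
  have hN : ∀ t, N (t + 1) = update (N t) (e t) (N t (e t) + 1) := fun t => rfl
  have hx : ∀ t i, x (t + 1) i ∈ cylinder (x t i) (N t i) := fun t => hF (seq t) _
  have hNmono : ∀ i, Monotone (N · i) := fun i => monotone_nat_of_le_succ fun t => by
    rw [hN]
    rcases eq_or_ne i (e t) with rfl | hi <;> simp [*]
  have hNpair : ∀ i j, j ≤ N (Nat.pair i j) i := by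
    intro i j
    induction j with
    | zero => exact Nat.zero_le _
    | succ j ih =>
      calc j + 1 ≤ N (Nat.pair i j + 1) i := by simp [hN, e, ih]
        _ ≤ N (Nat.pair i (j + 1)) i := hNmono i (Nat.pair_lt_pair_right i j.lt_succ_self)
  have hanti : ∀ i, Antitone fun t => cylinder (x t i) (N t i) := fun i =>
    antitone_nat_of_succ_le fun t => (cylinder_anti _ (hNmono i t.le_succ)).trans
      (mem_cylinder_iff_eq.1 (hx t i)).subset
  choose z hz using fun i => exists_forall_mem_cylinder (hanti i) fun j =>
    ⟨Nat.pair i (j + 1), hNpair i (j + 1)⟩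
  refine ⟨z, fun n => ⟨x (Nat.pair n n), N (Nat.pair n n), (seq _).2, fun i hi => ?_,
    fun i => hz i _⟩⟩
  refine (hNpair i n).trans (hNmono i ?_)
  rcases hi.lt_or_eq with hi | rfl
  · exact (Nat.pair_lt_pair_left n hi).le
  · rfl

end PiNat

namespace MeasureTheory

section Separation

variable {α : Type*} [MeasurableSpace α]

def MeasurablySeparableFamily (s : ℕ → Set α) : Prop :=
  ∃ B : ℕ → Set α, (∀ i, MeasurableSet (B i)) ∧ (∀ i, s i ⊆ B i) ∧ ⋂ i, B i = ∅

namespace MeasurablySeparableFamily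

variable {s : ℕ → Set α}

lemma of_measurablySeparable {i j : ℕ} (h : MeasurablySeparable (s i) (s j)) :
    MeasurablySeparableFamily s := by
  obtain ⟨u, hsu, hdisj, hu⟩ := h
  refine ⟨fun k => (if k = i then u else univ) ∩ (if k = j then uᶜ else univ),
    fun k => ?_, fun k => subset_inter ?_ ?_, ?_⟩
  · refine .inter ?_ ?_ <;> split_ifs <;> simp [hu]
  · split_ifs with hk
    exacts [hk ▸ hsu, subset_univ _]
  · split_ifs with hk
    exacts [hk ▸ hdisj.subset_compl_right, subset_univ _]
  · refine eq_empty_of_forall_notMem fun x hx => ?_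
    have hxu : x ∈ u := by simpa using (mem_iInter.1 hx i).1
    have hxu' : x ∉ u := by simpa using (mem_iInter.1 hx j).2
    exact hxu' hxu

lemma of_subset_iUnion {m : ℕ} {t : ℕ → Set α} (hsm : s m ⊆ ⋃ j, t j)
    (h : ∀ j, MeasurablySeparableFamily (update s m (t j))) : MeasurablySeparableFamily s := by
  choose B hB hsB hB₀ using h
  refine ⟨fun i => if i = m then ⋃ j, B j m else ⋂ j, B j i, fun i => ?_, fun i => ?_, ?_⟩
  · dsimp only
    split_ifs
    exacts [.iUnion fun j => hB j m, .iInter fun j => hB j i]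
  · dsimp only
    split_ifs with hi
    · subst hi
      exact hsm.trans (iUnion_mono fun j => by simpa using hsB j i)
    · exact subset_iInter fun j => by simpa [hi] using hsB j i
  · refine eq_empty_of_forall_notMem fun x hx => ?_
    rw [mem_iInter] at hx
    obtain ⟨j, hj⟩ := mem_iUnion.1 (by simpa using hx m)
    suffices x ∈ ⋂ i, B j i by simp [hB₀ j] at this
    refine mem_iInter.2 fun i => ?_
    rcases eq_or_ne i m with rfl | hi
    · exact hj
    · simpa [hi] using mem_iInter.1 (by simpa [hi] using hx i) j

end MeasurablySeparableFamily

lemma exists_refinement_not_measurablySeparableFamily {f : ℕ → (ℕ → ℕ) → α}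
    {x : ℕ → ℕ → ℕ} {N : ℕ → ℕ}
    (h : ¬ MeasurablySeparableFamily fun i => f i '' PiNat.cylinder (x i) (N i)) (m : ℕ) :
    ∃ x' : ℕ → ℕ → ℕ, (∀ i, x' i ∈ PiNat.cylinder (x i) (N i)) ∧
      ¬ MeasurablySeparableFamily fun i =>
        f i '' PiNat.cylinder (x' i) (update N m (N m + 1) i) := by
  by_contra! hcon
  refine h (.of_subset_iUnion (m := m)
    (t := fun j => f m '' PiNat.cylinder (update (x m) (N m) j) (N m + 1)) ?_ fun j => ?_)
  · rw [← image_iUnion]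
    exact image_mono (PiNat.iUnion_cylinder_update (x m) (N m)).superset
  · have hx' : ∀ i, update x m (update (x m) (N m) j) i ∈ PiNat.cylinder (x i) (N i) := by
      intro i
      rcases eq_or_ne i m with rfl | hi
      · simpa using PiNat.update_mem_cylinder _ _ _
      · simp [hi]
    convert hcon _ hx' using 2 with i
    rcases eq_or_ne i m with rfl | hi <;> simp [*]

variable [TopologicalSpace α] [T2Space α] [OpensMeasurableSpace α]

theorem measurablySeparableFamily_range {f : ℕ → (ℕ → ℕ) → α} (hf : ∀ i, Continuous (f i))
    (h : ⋂ i, range (f i) = ∅) : MeasurablySeparableFamily fun i => range (f i) := by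
  by_contra hbad
  let P : (ℕ → ℕ → ℕ) → (ℕ → ℕ) → Prop := fun x N =>
    ¬ MeasurablySeparableFamily fun i => f i '' PiNat.cylinder (x i) (N i)
  have h₀ : P 0 0 := by simpa [P, PiNat.cylinder_zero] using hbad
  obtain ⟨z, hz⟩ := PiNat.exists_forall_mem_cylinder_of_refine P h₀
    fun _ _ => exists_refinement_not_measurablySeparableFamily
  have hconst : ∀ i, f i (z i) = f 0 (z 0) := by
    intro i
    by_contra hne
    -- then small cylinders around `z i` and `z 0` have images in disjoint open sets
    obtain ⟨u, v, hu, hv, hzu, hzv, huv⟩ := t2_separation hne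
    obtain ⟨nu, hnu⟩ := PiNat.exists_cylinder_subset_of_mem_nhds
      ((hf i).continuousAt.preimage_mem_nhds (hu.mem_nhds hzu))
    obtain ⟨nv, hnv⟩ := PiNat.exists_cylinder_subset_of_mem_nhds
      ((hf 0).continuousAt.preimage_mem_nhds (hv.mem_nhds hzv))
    obtain ⟨x, N, hxN, hN, hzx⟩ := hz (max i (max nu nv))
    apply hxN
    simp only [(PiNat.mem_cylinder_iff_eq.1 (hzx _)).symm]
    refine .of_measurablySeparable (i := i) (j := 0) ⟨u, ?_, ?_, hu.measurableSet⟩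
    · exact image_subset_iff.2 ((PiNat.cylinder_anti _ ((le_max_left _ _).trans
        ((le_max_right _ _).trans (hN i (le_max_left _ _))))).trans hnu)
    · refine huv.symm.mono_left (image_subset_iff.2 ((PiNat.cylinder_anti _ ?_).trans hnv))
      exact (le_max_right _ _).trans ((le_max_right _ _).trans (hN 0 (Nat.zero_le _)))
  refine (h.subset (mem_iInter.2 fun i => ?_) : f 0 (z 0) ∈ (∅ : Set α))
  exact hconst i ▸ mem_range_self _

/-- **Novikov's separation theorem**. -/
theorem AnalyticSet.measurablySeparableFamily_s10 {s : ℕ → Set α} (hs : ∀ i, AnalyticSet (s i))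
    (h : ⋂ i, s i = ∅) : MeasurablySeparableFamily s := by
  by_cases hempty : ∃ i, s i = ∅
  · obtain ⟨i, hi⟩ := hempty
    exact .of_measurablySeparable (i := i) (j := i) ⟨∅, by simp [hi], by simp, .empty⟩
  push Not at hempty
  choose f hf hrange using fun i => (AnalyticSet_def (s i) ▸ hs i).resolve_left (hempty i).ne_empty
  obtain rfl : s = fun i => range (f i) := funext fun i => (hrange i).symm
  exact measurablySeparableFamily_range hf h

lemma exists_measurable_forall_notMem {D : ℕ → Set α} (hD : ∀ n, AnalyticSet (D n))
    (h : ∀ x, ∃ n, x ∉ D n) : ∃ N : α → ℕ, Measurable N ∧ ∀ x, x ∉ D (N x) := by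
  classical
  obtain ⟨B, hB, hDB, hB₀⟩ := AnalyticSet.measurablySeparableFamily_s10 hD
    (eq_empty_of_forall_notMem fun x hx => (h x).elim fun n hn => hn (mem_iInter.1 hx n))
  have hex : ∀ x, ∃ n, x ∉ B n := fun x => by
    by_contra! hx
    simpa [hB₀] using mem_iInter.2 hx
  exact ⟨fun x => Nat.find (hex x), measurable_find hex fun n => (hB n).compl,
    fun x hx => Nat.find_spec (hex x) (hDB _ hx)⟩

end Separation

section SemiAnalytic

variable {α : Type*} [TopologicalSpace α]

def UpperSemiAnalytic (F : α → ℝ) : Prop := ∀ t, AnalyticSet {z | t < F z}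

def LowerSemiAnalytic (F : α → ℝ) : Prop := ∀ t, AnalyticSet {z | F z < t}

lemma AnalyticSet.union [T2Space α] {s t : Set α} (hs : AnalyticSet s) (ht : AnalyticSet t) :
    AnalyticSet (s ∪ t) := by
  rw [union_eq_iUnion]
  exact AnalyticSet.iUnion fun b => by cases b <;> assumption

lemma AnalyticSet.inter [T2Space α] {s t : Set α} (hs : AnalyticSet s) (ht : AnalyticSet t) :
    AnalyticSet (s ∩ t) := by
  rw [inter_eq_iInter]
  exact AnalyticSet.iInter fun b => by cases b <;> assumption

lemma UpperSemiAnalytic.analyticSet_lt [PolishSpace α] [MeasurableSpace α] [BorelSpace α]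
    {F h : α → ℝ} (hF : UpperSemiAnalytic F) (hh : Measurable h) :
    AnalyticSet {z | h z < F z} := by
  have : {z | h z < F z} = ⋃ q : ℚ, {z | h z ≤ q} ∩ {z | q < F z} := by
    ext z
    simp only [mem_ofPred_eq, mem_iUnion, mem_inter_iff]
    refine ⟨fun hz => ?_, fun ⟨q, hhq, hqF⟩ => hhq.trans_lt hqF⟩
    obtain ⟨q, hhq, hqF⟩ := exists_rat_btwn hz
    exact ⟨q, hhq.le, hqF⟩
  rw [this]
  exact AnalyticSet.iUnion fun q => (hh measurableSet_Iic).analyticSet.inter (hF q)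

lemma exists_measurable_between [T2Space α] [MeasurableSpace α] [OpensMeasurableSpace α]
    {U L : α → ℝ} (hU : UpperSemiAnalytic U) (hL : LowerSemiAnalytic L) (hUL : U ≤ L) :
    ∃ B : α → ℝ, Measurable B ∧ U ≤ B ∧ B ≤ L := by
  have hsep : ∀ q : ℚ, MeasurablySeparable {x | q < U x} {x | L x < q} := fun q =>
    (hU q).measurablySeparable (hL q) <| disjoint_left.2 fun x hUx hLx =>
      (hUL x).not_gt (lt_trans hLx hUx)
  choose S hUS hLS hSmeas using hsep
  let Q : α → Set ℝ := fun x => (↑) '' {q : ℚ | x ∈ S q}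
  have hQL : ∀ x, L x ∈ upperBounds (Q x) := by
    rintro x _ ⟨q, hq, rfl⟩
    by_contra! hLq
    exact disjoint_left.1 (hLS q) hLq hq
  have hUQ : ∀ x, ∀ q : ℚ, (q : ℝ) < U x → (q : ℝ) ∈ Q x := fun x q hq => ⟨q, hUS q hq, rfl⟩
  have hQne : ∀ x, (Q x).Nonempty := fun x =>
    let ⟨q, hq⟩ := exists_rat_lt (U x); ⟨q, hUQ x q hq⟩
  refine ⟨fun x => sSup (Q x), measurable_of_Ioi fun t => ?_, fun x => ?_, fun x => ?_⟩
  · have : (fun x => sSup (Q x)) ⁻¹' Ioi t = ⋃ q : ℚ, ⋃ _ : t < q, S q := by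
      ext x
      simp [lt_csSup_iff ⟨L x, hQL x⟩ (hQne x), Q, and_comm]
    rw [this]
    exact .iUnion fun q => .iUnion fun _ => hSmeas q
  · exact le_of_forall_rat_lt_imp_le fun q hq => le_csSup ⟨L x, hQL x⟩ (hUQ x q hq)
  · exact csSup_le (hQne x) (hQL x)

end SemiAnalytic

section Selection

variable {X : Type*} [TopologicalSpace X] [PolishSpace X] [MeasurableSpace X] [BorelSpace X]
variable {f : X → ℝ → ℝ} (hf : UpperSemiAnalytic (uncurry f))
include hf

lemma analyticSet_exists_mul_add_lt {C : X → ℝ} (hC : Measurable C) {s : Set ℝ}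
    (hs : MeasurableSet s) (q : ℝ) : AnalyticSet {x | ∃ y ∈ s, q * y + C x < f x y} := by
  have : {x | ∃ y ∈ s, q * y + C x < f x y} =
      Prod.fst '' ({p : X × ℝ | p.2 ∈ s} ∩ {p | q * p.2 + C p.1 < uncurry f p}) := by
    ext x
    simp
  rw [this]
  refine AnalyticSet.image_of_continuous (.inter ?_ ?_) continuous_fst
  · exact (measurable_snd hs).analyticSet
  · exact hf.analyticSet_lt (by fun_prop)

theorem exists_measurable_intercept (h : ∀ x, ∃ m c, ∀ y, f x y ≤ m * y + c) :
    ∃ C : X → ℝ, Measurable C ∧ ∀ x, ∃ m, ∀ y, f x y ≤ m * y + C x := by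
  let D : ℕ → Set X := fun n => {x | ¬ ∃ m, ∀ y, f x y ≤ m * y + n}
  have hD : ∀ n, AnalyticSet (D n) := by
    intro n
    have : D n = {x | (n : ℝ) < f x 0} ∪ ⋃ q : ℚ,
        {x | ∃ y ∈ Ioi 0, q * y + n < f x y} ∩ {x | ∃ y ∈ Iio 0, q * y + n < f x y} := by
      ext x
      simp [D, exists_forall_le_mul_add_iff, not_or, imp_iff_not_or]
    rw [this]
    exact .union ((hf n).preimage (f := fun x => (x, 0)) (by fun_prop)) <| .iUnion fun q =>
      (analyticSet_exists_mul_add_lt hf measurable_const measurableSet_Ioi q).inter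
        (analyticSet_exists_mul_add_lt hf measurable_const measurableSet_Iio q)
  have hex : ∀ x, ∃ n, x ∉ D n := fun x => by
    obtain ⟨m, c, hmc⟩ := h x
    exact ⟨⌈c⌉₊, not_not.2 ⟨m, fun y => (hmc y).trans (by gcongr; exact Nat.le_ceil c)⟩⟩
  obtain ⟨N, hN, hND⟩ := exists_measurable_forall_notMem hD hex
  exact ⟨fun x => N x, measurable_from_top.comp hN, fun x => not_not.1 (hND x)⟩

theorem exists_measurable_slope {C : X → ℝ} (hC : Measurable C)
    (h : ∀ x, ∃ m, ∀ y, f x y ≤ m * y + C x) :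
    ∃ B : X → ℝ, Measurable B ∧ ∀ x y, f x y ≤ B x * y + C x := by
  choose m hm using h
  have hbounds := fun x => forall_le_mul_add_iff.1 (hm x)
  let U x := sSup (rightSlopes (f x) (C x))
  let L x := sInf (leftSlopes (f x) (C x))
  have hbddU : ∀ x, BddAbove (rightSlopes (f x) (C x)) := fun x => ⟨m x, (hbounds x).2.1⟩
  have hbddL : ∀ x, BddBelow (leftSlopes (f x) (C x)) := fun x => ⟨m x, (hbounds x).2.2⟩
  have hU : UpperSemiAnalytic U := fun t => by
    simpa only [U, lt_sSup_rightSlopes_iff (hbddU _), mem_Ioi] using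
      analyticSet_exists_mul_add_lt hf hC measurableSet_Ioi t
  have hL : LowerSemiAnalytic L := fun t => by
    simpa only [L, sInf_leftSlopes_lt_iff (hbddL _), mem_Iio] using
      analyticSet_exists_mul_add_lt hf hC measurableSet_Iio t
  have hUL : U ≤ L := fun x => (csSup_le rightSlopes_nonempty (hbounds x).2.1).trans
    (le_csInf leftSlopes_nonempty (hbounds x).2.2)
  obtain ⟨B, hB, hUB, hBL⟩ := exists_measurable_between hU hL hUL
  refine ⟨B, hB, fun x => forall_le_mul_add_iff.2 ⟨(hbounds x).1, fun s hs => ?_, fun s hs => ?_⟩⟩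
  · exact (le_csSup (hbddU x) hs).trans (hUB x)
  · exact (hBL x).trans (csInf_le (hbddL x) hs)

end Selection

end MeasureTheory

open MeasureTheory

/-- Hyperplane selection, one-dimensional case. -/
theorem hyperplane_selection_dim_one {X : Type*} [TopologicalSpace X] [PolishSpace X]
    [MeasurableSpace X] [BorelSpace X]
    (f : X → ℝ → ℝ)
    (husa : ∀ γ : ℝ, AnalyticSet {p : X × ℝ | γ < f p.1 p.2})
    (b c : X → ℝ)
    (hdom : ∀ x y, f x y ≤ b x * y + c x) :
    ∃ B C : X → ℝ, Measurable B ∧ Measurable C ∧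
      ∀ x y, f x y ≤ B x * y + C x := by
  obtain ⟨C, hC, hCmaj⟩ := exists_measurable_intercept husa fun x => ⟨b x, c x, hdom x⟩
  obtain ⟨B, hB, hBC⟩ := exists_measurable_slope husa hC hCmaj
  exact ⟨B, C, hB, hC, hBC⟩
end

section
/- (Linear functional selection) Let X be a Polish space, Y ⊆ ℝ^n a Borel set, and f : X × Y → ℝ upper semi-analytic. Suppose there exists a : X → ℝ^n with f(x,y) ≤ a(x)·y for all x ∈ X, y ∈ Y. Then there exists a Borel measurable A : X → ℝ^n with f(x,y) ≤ A(x)·y for all x ∈ X, y ∈ Y. -/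
/-!
For each `x` the functionals dominating `f x ·` on `Y` form a closed set `C x`, nonempty because
it contains `a x`. For compact `K` the set of `x` with `C x ∩ K = ∅` is analytic: by compactness
finitely many `y ∈ Y` witness `v ⬝ᵥ y < f x y` for all `v ∈ K` at once, so this set is a countable
union of projections of analytic sets. If every `x` has `C x ∩ K i ≠ ∅` for one of countably many
compact `K i`, Novikov's separation theorem makes the choice of such an `i` a Borel function of `x`.
Choosing in this way closed balls of radius `2⁻ᵏ` around points of a dense sequence, each centre
within `3/2 · 2⁻ᵏ` of the previous one, gives Borel maps converging geometrically; their limit is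
Borel and lies in the closed set `C x`.

Novikov's theorem follows Lusin's argument: if the analytic sets were not Borel-separable, one
could shrink them to images of ever smaller cylinders of `ℕ → ℕ` keeping this property, and the
images of the limit points, which cannot all coincide, would be separated by open sets.
-/

open MeasureTheory Set Function Filter Topology PiNat Metric

section Novikov

variable {α : Type*} [MeasurableSpace α]

def MeasurablySeparableSeq (s : ℕ → Set α) : Prop :=
  ∃ t : ℕ → Set α, (∀ n, s n ⊆ t n) ∧ (∀ n, MeasurableSet (t n)) ∧ ⋂ n, t n = ∅

namespace MeasurablySeparableSeq

theorem of_update_iUnion {ι : Type*} [Countable ι] {s : ℕ → Set α} {N : ℕ}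
    {u : ι → Set α} (hs : s N = ⋃ i, u i)
    (h : ∀ i, MeasurablySeparableSeq (update s N (u i))) : MeasurablySeparableSeq s := by
  choose t hst ht hempty using h
  refine ⟨update (fun m => ⋂ i, t i m) N (⋃ i, t i N), fun m => ?_, fun m => ?_, ?_⟩
  · rcases eq_or_ne m N with rfl | hm
    · simpa [hs] using iUnion_mono fun i => by simpa using hst i m
    · simpa [hm] using subset_iInter fun i => by simpa [hm] using hst i m
  · rcases eq_or_ne m N with rfl | hm
    · simpa using MeasurableSet.iUnion fun i => ht i m
    · simpa [hm] using MeasurableSet.iInter fun i => ht i m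
  · refine eq_empty_of_forall_notMem fun z hz => ?_
    obtain ⟨i, hi⟩ := mem_iUnion.1 (by simpa using mem_iInter.1 hz N)
    have hzi : z ∈ ⋂ m, t i m := mem_iInter.2 fun m => by
      rcases eq_or_ne m N with rfl | hm
      · exact hi
      · exact mem_iInter.1 (by simpa [hm] using mem_iInter.1 hz m) i
    simp [hempty i] at hzi

theorem of_measurablySeparable {s : ℕ → Set α} {n m : ℕ} (hnm : n ≠ m)
    (h : MeasurablySeparable (s n) (s m)) : MeasurablySeparableSeq s := by
  obtain ⟨u, hsu, hdisj, hu⟩ := h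
  refine ⟨update (update (fun _ => univ) n u) m uᶜ, fun k => ?_, fun k => ?_, ?_⟩
  · rcases eq_or_ne k m with rfl | hkm
    · simpa using hdisj.subset_compl_right
    rcases eq_or_ne k n with rfl | hkn <;> simp [*]
  · rcases eq_or_ne k m with rfl | hkm
    · simpa using hu.compl
    rcases eq_or_ne k n with rfl | hkn <;> simp [*]
  · refine eq_empty_of_forall_notMem fun z hz => ?_
    have hzn := mem_iInter.1 hz n
    have hzm := mem_iInter.1 hz m
    simp [hnm] at hzn hzm
    exact hzm hzn

end MeasurablySeparableSeq

theorem PiNat.exists_cylinder_subset {E : ℕ → Type*} [∀ n, TopologicalSpace (E n)]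
    [∀ n, DiscreteTopology (E n)] {U : Set (∀ n, E n)} (hU : IsOpen U) {y : ∀ n, E n}
    (hy : y ∈ U) : ∃ L, cylinder y L ⊆ U := by
  obtain ⟨_, ⟨z, L, rfl⟩, hyz, hzU⟩ :=
    (isTopologicalBasis_cylinders E).exists_subset_of_mem_open hy hU
  exact ⟨L, (mem_cylinder_iff_eq.1 hyz).trans_subset hzU⟩

theorem PiNat.mem_cylinder_trans {E : ℕ → Type*} {x y z : ∀ n, E n} {n : ℕ}
    (hyx : y ∈ cylinder x n) (hzy : z ∈ cylinder y n) : z ∈ cylinder x n :=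
  mem_cylinder_iff_eq.2 ((mem_cylinder_iff_eq.1 hzy).trans (mem_cylinder_iff_eq.1 hyx))

variable {f : ℕ → (ℕ → ℕ) → α}

theorem exists_mem_cylinder_not_measurablySeparableSeq (x : ℕ → ℕ → ℕ) (l : ℕ → ℕ)
    (h : ¬MeasurablySeparableSeq fun n => f n '' cylinder (x n) (l n)) (N : ℕ) :
    ∃ x' : ℕ → ℕ → ℕ, (∀ n, x' n ∈ cylinder (x n) (l n)) ∧
      ¬MeasurablySeparableSeq fun n =>
        f n '' cylinder (x' n) (if n < N then l n + 1 else l n) := by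
  induction N with
  | zero => exact ⟨x, fun n => self_mem_cylinder _ _, by simpa using h⟩
  | succ N ih =>
    obtain ⟨x', hx', h'⟩ := ih
    obtain ⟨k, hk⟩ : ∃ k, ¬MeasurablySeparableSeq (update
        (fun n => f n '' cylinder (x' n) (if n < N then l n + 1 else l n)) N
        (f N '' cylinder (update (x' N) (l N) k) (l N + 1))) := by
      by_contra! H
      refine h' (MeasurablySeparableSeq.of_update_iUnion ?_ H)
      rw [if_neg (lt_irrefl N), ← iUnion_cylinder_update (x' N) (l N), image_iUnion]
    refine ⟨update x' N (update (x' N) (l N) k), fun n => ?_, ?_⟩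
    · rcases eq_or_ne n N with rfl | hn
      · simpa using mem_cylinder_trans (hx' n) (update_mem_cylinder _ _ _)
      · simpa [hn] using hx' n
    · convert hk using 2
      funext n
      rcases eq_or_ne n N with rfl | hn
      · simp
      · have : n < N + 1 ↔ n < N := by omega
        simp [hn, this]

variable [TopologicalSpace α] [T2Space α] [OpensMeasurableSpace α]

theorem exists_measurablySeparableSeq_of_apply_ne (hf : ∀ n, Continuous (f n))
    {y : ℕ → ℕ → ℕ} {n m : ℕ} (h : f n (y n) ≠ f m (y m)) :
    ∃ L, ∀ l : ℕ → ℕ, L ≤ l n → L ≤ l m →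
      MeasurablySeparableSeq fun j => f j '' cylinder (y j) (l j) := by
  have hnm : n ≠ m := fun hnm => h (by rw [hnm])
  obtain ⟨u, v, hu, hv, hyu, hyv, huv⟩ := t2_separation h
  obtain ⟨Ln, hLn⟩ := exists_cylinder_subset (hu.preimage (hf n)) hyu
  obtain ⟨Lm, hLm⟩ := exists_cylinder_subset (hv.preimage (hf m)) hyv
  refine ⟨max Ln Lm, fun l hln hlm => MeasurablySeparableSeq.of_measurablySeparable hnm
    ⟨u, ?_, ?_, hu.measurableSet⟩⟩
  · exact image_subset_iff.2 ((cylinder_anti _ (le_of_max_le_left hln)).trans hLn)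
  · refine huv.symm.mono_left (image_subset_iff.2 ?_)
    exact (cylinder_anti _ (le_of_max_le_right hlm)).trans hLm

theorem measurablySeparableSeq_range (hf : ∀ n, Continuous (f n))
    (h : ⋂ n, range (f n) = ∅) : MeasurablySeparableSeq fun n => range (f n) := by
  by_contra hsep
  -- at stage `k` the `n`-th cylinder has length `k - n`; stage `k` lengthens the first `k + 1`
  have step : ∀ (k : ℕ) (x : ℕ → ℕ → ℕ),
      (¬MeasurablySeparableSeq fun n => f n '' cylinder (x n) (k - n)) →
      ∃ x' : ℕ → ℕ → ℕ, (∀ n, x' n ∈ cylinder (x n) (k - n)) ∧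
        ¬MeasurablySeparableSeq fun n => f n '' cylinder (x' n) (k + 1 - n) := by
    intro k x hx
    obtain ⟨x', hx', h'⟩ := exists_mem_cylinder_not_measurablySeparableSeq x (k - ·) hx (k + 1)
    refine ⟨x', hx', ?_⟩
    convert h' using 5 with n
    split_ifs <;> omega
  choose! F hF_mem hF_sep using step
  let x : ℕ → ℕ → ℕ → ℕ := fun k => Nat.rec (fun _ _ => 0) F k
  have hx_sep : ∀ k, ¬MeasurablySeparableSeq fun n => f n '' cylinder (x k n) (k - n) := by
    intro k
    induction k with
    | zero => simpa [cylinder_zero] using hsep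
    | succ k ih => exact hF_sep k _ ih
  have hx_mem : ∀ k k', k ≤ k' → ∀ n, x k' n ∈ cylinder (x k n) (k - n) := by
    intro k k' hkk'
    induction hkk' with
    | refl => exact fun n => self_mem_cylinder _ _
    | @step k' hkk' ih =>
      intro n
      exact mem_cylinder_trans (ih n)
        (cylinder_anti _ (Nat.sub_le_sub_right hkk' n) (hF_mem k' _ (hx_sep k') n))
  -- coordinate `m` of `x k n` no longer changes once `k ≥ n + m + 1`
  set y : ℕ → ℕ → ℕ := fun n m => x (n + m + 1) n m
  have hy_sep : ∀ k, ¬MeasurablySeparableSeq fun n => f n '' cylinder (y n) (k - n) := by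
    intro k
    convert hx_sep k using 4 with n
    refine mem_cylinder_iff_eq.1 (mem_cylinder_iff.2 fun m hm => ?_)
    exact (mem_cylinder_iff.1 (hx_mem (n + m + 1) k (by omega) n) m (by omega)).symm
  obtain ⟨n, m, hnm⟩ : ∃ n m, f n (y n) ≠ f m (y m) := by
    by_contra! H
    have : f 0 (y 0) ∈ ⋂ m, range (f m) := mem_iInter.2 fun m => ⟨y m, (H 0 m).symm⟩
    simp [h] at this
  obtain ⟨L, hL⟩ := exists_measurablySeparableSeq_of_apply_ne hf hnm
  exact hy_sep (n + m + L) (hL (n + m + L - ·) (by omega) (by omega))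

/-- **Novikov's separation theorem**. -/
theorem AnalyticSet.measurablySeparableSeq {s : ℕ → Set α} (hs : ∀ n, AnalyticSet (s n))
    (h : ⋂ n, s n = ∅) : MeasurablySeparableSeq s := by
  rcases em (∃ n, s n = ∅) with ⟨n, hn⟩ | hne
  · exact MeasurablySeparableSeq.of_measurablySeparable (n.succ_ne_self.symm)
      ⟨∅, hn.subset, disjoint_bot_right, MeasurableSet.empty⟩
  have hrange : ∀ n, ∃ g : (ℕ → ℕ) → α, Continuous g ∧ range g = s n := fun n => by
    have := hs n
    rw [AnalyticSet] at this
    exact this.resolve_left (not_exists.1 hne n)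
  choose g hg hgs using hrange
  simpa only [hgs] using measurablySeparableSeq_range hg (by simpa only [hgs] using h)

theorem exists_measurable_forall_notMem_of_analyticSet {A : ℕ → Set α}
    (hA : ∀ i, AnalyticSet (A i)) (h : ∀ x, ∃ i, x ∉ A i) :
    ∃ σ : α → ℕ, Measurable σ ∧ ∀ x, x ∉ A (σ x) := by
  classical
  obtain ⟨B, hAB, hB, hBempty⟩ := AnalyticSet.measurablySeparableSeq hA
    (eq_empty_of_forall_notMem fun x hx => (h x).elim fun i hi => hi (mem_iInter.1 hx i))
  have hxB : ∀ x, ∃ i, x ∉ B i := fun x => by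
    by_contra! H
    simpa [hBempty] using mem_iInter.2 H
  exact ⟨fun x => Nat.find (hxB x), measurable_find hxB fun i => (hB i).compl,
    fun x hx => Nat.find_spec (hxB x) (hAB _ hx)⟩

end Novikov

section Analytic

variable {X : Type*} [TopologicalSpace X]

theorem IsOpen.analyticSet [PolishSpace X] {s : Set X} (hs : IsOpen s) : AnalyticSet s := by
  simpa using hs.analyticSet_image continuous_id

theorem MeasureTheory.AnalyticSet.union_s12 {s t : Set X} (hs : AnalyticSet s) (ht : AnalyticSet t) :
    AnalyticSet (s ∪ t) := by
  rw [union_eq_iUnion]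
  exact AnalyticSet.iUnion fun b => by cases b <;> assumption

theorem IsCompact.exists_fin_subcover {V ι : Type*} [TopologicalSpace V] {K : Set V}
    (hK : IsCompact K) (U : ι → Set V) (hU : ∀ i, IsOpen (U i)) (hKU : K ⊆ ⋃ i, U i) :
    ∃ (N : ℕ) (e : Fin N → ι), K ⊆ ⋃ j, U (e j) := by
  obtain ⟨t, ht⟩ := hK.elim_finite_subcover U hU hKU
  refine ⟨t.card, fun j => t.equivFin.symm j, ht.trans (iUnion₂_subset fun i hi => ?_)⟩
  exact subset_iUnion_of_subset (t.equivFin ⟨i, hi⟩) (by simp)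

theorem analyticSet_setOf_forall_mem_exists_of_isCompact {Z V ι : Type*} [PolishSpace X]
    [TopologicalSpace Z] [PolishSpace Z] [TopologicalSpace V] [Countable ι]
    {S : ι → Set (X × Z)} (hS : ∀ i, AnalyticSet (S i)) {O : ι → Set (V × Z)}
    (hO : ∀ i, IsOpen (O i)) {K : Set V} (hK : IsCompact K) :
    AnalyticSet {x | ∀ v ∈ K, ∃ i z, (x, z) ∈ S i ∧ (v, z) ∈ O i} := by
  -- by compactness, finitely many witnesses `(q j, g j)` serve all of `K`
  set W : (N : ℕ) → (Fin N → ι) → Set (Fin N → Z) :=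
    fun N q => {g | ∀ v ∈ K, ∃ j, (v, g j) ∈ O (q j)}
  have hW : ∀ N q, IsOpen (W N q) := fun N q => isOpen_iff_mem_nhds.2 fun g hg =>
    hK.eventually_forall_of_forall_eventually fun v hv => by
      obtain ⟨j, hj⟩ := hg v hv
      have : Continuous fun p : (Fin N → Z) × V => (p.2, p.1 j) := by fun_prop
      exact (((hO (q j)).preimage this).eventually_mem hj).mono fun p hp => ⟨j, hp⟩
  have : {x | ∀ v ∈ K, ∃ i z, (x, z) ∈ S i ∧ (v, z) ∈ O i} =
      ⋃ (N : ℕ) (q : Fin N → ι), Prod.fst '' ⋂ o : Option (Fin N),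
        o.elim (Prod.snd ⁻¹' W N q)
          fun j => (fun p : X × (Fin N → Z) => (p.1, p.2 j)) ⁻¹' S (q j) := by
    ext x
    simp only [mem_ofPred_eq, mem_iUnion, mem_image, mem_iInter, Option.forall, Option.elim,
      mem_preimage, Prod.exists, exists_and_right, exists_eq_right]
    constructor
    · intro hx
      obtain ⟨N, e, he⟩ := hK.exists_fin_subcover
        (fun p : {p : ι × Z // (x, p.2) ∈ S p.1} => {v | (v, p.1.2) ∈ O p.1.1})
        (fun p => (hO _).preimage (Continuous.prodMk_left _))
        fun v hv => by
          obtain ⟨i, z, hz, hvz⟩ := hx v hv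
          exact mem_iUnion.2 ⟨⟨(i, z), hz⟩, hvz⟩
      refine ⟨N, fun j => (e j).1.1, fun j => (e j).1.2, fun v hv => ?_, fun j => (e j).2⟩
      simpa using he hv
    · rintro ⟨N, q, g, hg, hgS⟩ v hv
      obtain ⟨j, hj⟩ := hg v hv
      exact ⟨q j, g j, hgS j, hj⟩
  rw [this]
  refine AnalyticSet.iUnion fun N => AnalyticSet.iUnion fun q =>
    (AnalyticSet.iInter fun o => ?_).image_of_continuous continuous_fst
  cases o with
  | none => exact ((hW N q).preimage continuous_snd).analyticSet
  | some j => exact (hS (q j)).preimage (by fun_prop)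

theorem analyticSet_setOf_forall_mem_exists_dotProduct_lt {ι : Type*} [Fintype ι]
    [PolishSpace X] {Y : Set (ι → ℝ)} {f : X → (ι → ℝ) → ℝ}
    (husa : ∀ γ : ℝ, AnalyticSet {p : X × (ι → ℝ) | p.2 ∈ Y ∧ γ < f p.1 p.2})
    {K : Set (ι → ℝ)} (hK : IsCompact K) :
    AnalyticSet {x | ∀ v ∈ K, ∃ y ∈ Y, v ⬝ᵥ y < f x y} := by
  have : {x | ∀ v ∈ K, ∃ y ∈ Y, v ⬝ᵥ y < f x y} =
      {x | ∀ v ∈ K, ∃ (q : ℚ) (y : ι → ℝ),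
        (x, y) ∈ {p : X × (ι → ℝ) | p.2 ∈ Y ∧ (q : ℝ) < f p.1 p.2} ∧
        (v, y) ∈ {w : (ι → ℝ) × (ι → ℝ) | w.1 ⬝ᵥ w.2 < q}} := by
    ext x
    refine forall₂_congr fun v _ => ⟨?_, ?_⟩
    · rintro ⟨y, hy, hlt⟩
      obtain ⟨q, hq₁, hq₂⟩ := exists_rat_btwn hlt
      exact ⟨q, y, ⟨hy, hq₂⟩, hq₁⟩
    · rintro ⟨q, y, ⟨hy, hq₂⟩, hq₁⟩
      exact ⟨y, hy, hq₁.trans hq₂⟩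
  rw [this]
  exact analyticSet_setOf_forall_mem_exists_of_isCompact (fun q : ℚ => husa q)
    (fun q => isOpen_lt (by fun_prop) continuous_const) hK

end Analytic

section Selection

variable {X E : Type*} [TopologicalSpace X] [PolishSpace X] [MeasurableSpace X] [BorelSpace X]
  [MetricSpace E] [ProperSpace E] [MeasurableSpace E] {C : X → Set E}

theorem exists_measurable_dist_le_of_analyticSet
    (hC : ∀ K, IsCompact K → AnalyticSet {x | ∀ v ∈ K, v ∉ C x})
    {u : ℕ → E} (hu : DenseRange u) {r : ℝ} (hr : 0 < r) {P : X → E → Prop}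
    (hP : ∀ w, MeasurableSet {x | P x w})
    (h : ∀ x, ∃ v ∈ C x, ∀ w, dist v w < r → P x w) :
    ∃ c : X → E, Measurable c ∧ ∀ x, P x (c x) ∧ ∃ v ∈ C x, dist v (c x) ≤ r := by
  obtain ⟨σ, hσ, hσA⟩ := exists_measurable_forall_notMem_of_analyticSet
    (A := fun i => {x | ∀ v ∈ closedBall (u i) r, v ∉ C x} ∪ {x | ¬P x (u i)})
    (fun i => (hC _ (isCompact_closedBall _ _)).union_s12 (hP (u i)).compl.analyticSet)
    fun x => by
      obtain ⟨v, hv, hvP⟩ := h x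
      obtain ⟨i, hi⟩ := hu.exists_dist_lt v hr
      exact ⟨i, by simpa using ⟨⟨v, hi.le, hv⟩, hvP _ hi⟩⟩
  refine ⟨u ∘ σ, measurable_from_nat.comp hσ, fun x => ?_⟩
  obtain ⟨⟨v, hv, hvC⟩, hP⟩ := by simpa using hσA x
  exact ⟨hP, v, hvC, hv⟩

variable [BorelSpace E]

theorem exists_seq_measurable_dist_le_of_analyticSet
    (hC : ∀ K, IsCompact K → AnalyticSet {x | ∀ v ∈ K, v ∉ C x})
    (hne : ∀ x, (C x).Nonempty) {u : ℕ → E} (hu : DenseRange u) :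
    ∃ c : ℕ → X → E, (∀ k, Measurable (c k)) ∧
      (∀ k x, ∃ v ∈ C x, dist v (c k x) ≤ (1 / 2) ^ k) ∧
      ∀ k x, dist (c k x) (c (k + 1) x) ≤ 3 / 2 * (1 / 2) ^ k := by
  obtain ⟨c₀, hc₀, hc₀C⟩ := exists_measurable_dist_le_of_analyticSet hC hu one_pos
    (P := fun _ _ => True) (fun _ => MeasurableSet.univ)
    fun x => (hne x).imp fun v hv => ⟨hv, fun _ _ => trivial⟩
  have step : ∀ (k : ℕ) (c : X → E), Measurable c →
      (∀ x, ∃ v ∈ C x, dist v (c x) ≤ (1 / 2) ^ k) →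
      ∃ c' : X → E, Measurable c' ∧ ∀ x, dist (c x) (c' x) ≤ 3 / 2 * (1 / 2) ^ k ∧
        ∃ v ∈ C x, dist v (c' x) ≤ (1 / 2) ^ (k + 1) := by
    intro k c hc hcC
    refine exists_measurable_dist_le_of_analyticSet hC hu (by positivity)
      (P := fun x w => dist (c x) w ≤ 3 / 2 * (1 / 2) ^ k)
      (fun w => measurableSet_le (hc.dist measurable_const) measurable_const) fun x => ?_
    obtain ⟨v, hv, hvc⟩ := hcC x
    refine ⟨v, hv, fun w hw => ?_⟩
    calc dist (c x) w ≤ dist v (c x) + dist v w := dist_triangle_left _ _ _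
      _ ≤ (1 / 2) ^ k + (1 / 2) ^ (k + 1) := add_le_add hvc hw.le
      _ = 3 / 2 * (1 / 2) ^ k := by ring
  choose! next hnext_meas hnext using step
  let c : ℕ → X → E := fun k => Nat.rec c₀ next k
  have hc : ∀ k, Measurable (c k) ∧ ∀ x, ∃ v ∈ C x, dist v (c k x) ≤ (1 / 2) ^ k := by
    intro k
    induction k with
    | zero => simpa using ⟨hc₀, fun x => (hc₀C x).2⟩
    | succ k ih => exact ⟨hnext_meas k _ ih.1 ih.2, fun x => (hnext k _ ih.1 ih.2 x).2⟩
  exact ⟨c, fun k => (hc k).1, fun k => (hc k).2,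
    fun k x => (hnext k _ (hc k).1 (hc k).2 x).1⟩

theorem exists_measurable_forall_mem_of_analyticSet
    (hC : ∀ K, IsCompact K → AnalyticSet {x | ∀ v ∈ K, v ∉ C x})
    (hclosed : ∀ x, IsClosed (C x)) (hne : ∀ x, (C x).Nonempty) :
    ∃ A : X → E, Measurable A ∧ ∀ x, A x ∈ C x := by
  rcases isEmpty_or_nonempty X with hX | ⟨⟨x₀⟩⟩
  · exact ⟨isEmptyElim, Subsingleton.measurable, isEmptyElim⟩
  have : Nonempty E := ⟨(hne x₀).some⟩
  obtain ⟨u, hu⟩ := TopologicalSpace.exists_dense_seq E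
  obtain ⟨c, hc_meas, hc_near, hc_step⟩ :=
    exists_seq_measurable_dist_le_of_analyticSet hC hne hu
  choose A hA using fun x => cauchySeq_tendsto_of_complete
    (cauchySeq_of_le_geometric (1 / 2) (3 / 2) (by norm_num) fun k => hc_step k x)
  refine ⟨A, measurable_of_tendsto_metrizable hc_meas (tendsto_pi_nhds.2 hA), fun x => ?_⟩
  choose v hvC hv using fun k => hc_near k x
  have hv_lim : Tendsto v atTop (𝓝 (A x)) := (hA x).congr_dist <|
    squeeze_zero (fun _ => dist_nonneg) (fun k => (dist_comm _ _).trans_le (hv k))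
      (tendsto_pow_atTop_nhds_zero_of_lt_one (by norm_num) (by norm_num))
  exact (hclosed x).mem_of_tendsto hv_lim (Eventually.of_forall hvC)

end Selection

theorem linear_functional_selection_general {X : Type*} [TopologicalSpace X] [PolishSpace X]
    [MeasurableSpace X] [BorelSpace X]
    {n : ℕ} (Y : Set (Fin n → ℝ))
    (f : X → (Fin n → ℝ) → ℝ)
    (husa : ∀ γ : ℝ, AnalyticSet {p : X × (Fin n → ℝ) | p.2 ∈ Y ∧ γ < f p.1 p.2})
    (a : X → Fin n → ℝ)
    (hdom : ∀ x, ∀ y ∈ Y, f x y ≤ ∑ i, a x i * y i) :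
    ∃ A : X → Fin n → ℝ, Measurable A ∧
      ∀ x, ∀ y ∈ Y, f x y ≤ ∑ i, A x i * y i := by
  let C : X → Set (Fin n → ℝ) := fun x => {v | ∀ y ∈ Y, f x y ≤ v ⬝ᵥ y}
  have hC : ∀ K, IsCompact K → AnalyticSet {x | ∀ v ∈ K, v ∉ C x} := fun K hK => by
    simpa [C] using analyticSet_setOf_forall_mem_exists_dotProduct_lt husa hK
  have hclosed : ∀ x, IsClosed (C x) := fun x => by
    simp only [C, ofPred_forall]
    exact isClosed_biInter fun y _ => isClosed_le continuous_const (by fun_prop)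
  exact exists_measurable_forall_mem_of_analyticSet hC hclosed fun x => ⟨a x, hdom x⟩

/-- Linear functional selection: a pointwise linear domination of an upper
semi-analytic function can be chosen Borel measurably (and linear). -/
theorem linear_functional_selection {X : Type*} [TopologicalSpace X] [PolishSpace X]
    [MeasurableSpace X] [BorelSpace X]
    {n : ℕ} (Y : Set (Fin n → ℝ)) (hY : MeasurableSet Y)
    (f : X → (Fin n → ℝ) → ℝ)
    (husa : ∀ γ : ℝ, AnalyticSet {p : X × (Fin n → ℝ) | p.2 ∈ Y ∧ γ < f p.1 p.2})
    (a : X → Fin n → ℝ)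
    (hdom : ∀ x, ∀ y ∈ Y, f x y ≤ ∑ i, a x i * y i) :
    ∃ A : X → Fin n → ℝ, Measurable A ∧
      ∀ x, ∀ y ∈ Y, f x y ≤ ∑ i, A x i * y i :=
  linear_functional_selection_general Y f husa a hdom
end

section
/- (Feature-map selection) Let X and Y be Polish spaces, f : X × Y → ℝ upper semi-analytic, and φ : Y → ℝ^n Borel measurable. Suppose there exists a : X → ℝ^n with f(x,y) ≤ a(x)·φ(y) for all x ∈ X, y ∈ Y. Then there exists a Borel measurable A : X → ℝ^n with f(x,y) ≤ A(x)·φ(y) for all x ∈ X, y ∈ Y. -/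
open MeasureTheory Set Filter Topology

namespace FeatureMapSel

/-! ### A countable Novikov-type separation theorem -/

variable {α : Type*}

/-- A countable family of sets can be enlarged to measurable sets with empty intersection. -/
def Emptiable [MeasurableSpace α] (F : ℕ → Set α) : Prop :=
  ∃ B : ℕ → Set α, (∀ i, MeasurableSet (B i)) ∧ (∀ i, F i ⊆ B i) ∧ (⋂ i, B i) = ∅

lemma refine_step [MeasurableSpace α] {F : ℕ → Set α} (h : ¬ Emptiable F) (i₀ : ℕ)
    {G : ℕ → Set α} (hsub : F i₀ ⊆ ⋃ m, G m) :
    ∃ m, ¬ Emptiable (Function.update F i₀ (G m)) := by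
  by_contra hc
  push_neg at hc
  choose B hBmeas hBsub hBempty using hc
  apply h
  refine ⟨fun i => if i = i₀ then ⋃ m, B m i₀ else ⋂ m, B m i, fun i => ?_, fun i => ?_, ?_⟩
  · by_cases hi : i = i₀
    · simp only [hi, if_pos rfl]
      exact MeasurableSet.iUnion fun m => hBmeas m i₀
    · simp only [if_neg hi]
      exact MeasurableSet.iInter fun m => hBmeas m i
  · by_cases hi : i = i₀
    · subst hi
      simp only [if_pos rfl]
      refine hsub.trans (iUnion_mono fun m => ?_)
      have := hBsub m i
      rwa [Function.update_self] at this
    · simp only [if_neg hi]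
      refine subset_iInter fun m => ?_
      have := hBsub m i
      rwa [Function.update_of_ne hi] at this
  · ext x
    simp only [mem_iInter, mem_empty_iff_false, iff_false]
    intro hx
    have hx0 := hx i₀
    rw [if_pos rfl] at hx0
    obtain ⟨m, hm⟩ := mem_iUnion.1 hx0
    have hxm : x ∈ ⋂ i, B m i := by
      refine mem_iInter.2 fun i => ?_
      by_cases hi : i = i₀
      · subst hi; exact hm
      · have := hx i
        rw [if_neg hi] at this
        exact mem_iInter.1 this m
    rw [hBempty m] at hxm
    exact hxm

/-- Cylinder of all sequences agreeing with `g` below `t`. -/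
def cyl (t : ℕ) (g : ℕ → ℕ) : Set (ℕ → ℕ) := {x | ∀ k, k < t → x k = g k}

lemma cyl_zero (g : ℕ → ℕ) : cyl 0 g = univ := by
  ext x; simp [cyl]

lemma cyl_succ (t : ℕ) (g : ℕ → ℕ) :
    cyl t g = ⋃ m, cyl (t + 1) (Function.update g t m) := by
  ext x
  simp only [mem_iUnion]
  constructor
  · intro hx
    refine ⟨x t, fun k hk => ?_⟩
    rcases Nat.lt_succ_iff_lt_or_eq.1 hk with hk' | hk'
    · rw [Function.update_of_ne (Nat.ne_of_lt hk')]
      exact hx k hk'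
    · subst hk'
      rw [Function.update_self]
  · rintro ⟨m, hm⟩ k hk
    have := hm k (hk.trans (Nat.lt_succ_self t))
    rwa [Function.update_of_ne (Nat.ne_of_lt hk)] at this

/-- For an open set `O` with `σ x ∈ O` (`σ` continuous on Baire space), some cylinder
around `x` maps into `O`. -/
lemma exists_cyl_subset {β : Type*} [TopologicalSpace β] {σ : (ℕ → ℕ) → β}
    (hσ : Continuous σ) {x : ℕ → ℕ} {O : Set β} (hO : IsOpen O) (hx : σ x ∈ O) :
    ∃ N, ∀ y : ℕ → ℕ, (∀ k, k < N → y k = x k) → σ y ∈ O := by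
  have hP : IsOpen (σ ⁻¹' O) := hO.preimage hσ
  obtain ⟨I, u, hu, hsub⟩ := isOpen_pi_iff.1 hP x hx
  refine ⟨I.sup id + 1, fun y hy => ?_⟩
  apply hsub
  intro k hk
  have hkN : k < I.sup id + 1 := Nat.lt_succ_of_le (Finset.le_sup (f := id) hk)
  rw [hy k hkN]
  exact (hu k hk).2

/-- **Novikov's countable separation theorem**: countably many analytic sets with empty
intersection can be enlarged to Borel sets with empty intersection. -/
theorem novikov [TopologicalSpace α] [T2Space α] [MeasurableSpace α]
    [OpensMeasurableSpace α] {A : ℕ → Set α} (hA : ∀ i, AnalyticSet (A i))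
    (hempty : (⋂ i, A i) = ∅) : Emptiable A := by
  by_contra hbad
  -- every `A i` is nonempty
  have hne : ∀ i, (A i).Nonempty := by
    intro i
    rcases eq_empty_or_nonempty (A i) with h | h
    · exfalso
      apply hbad
      refine ⟨fun j => if j = i then ∅ else univ, fun j => ?_, fun j => ?_, ?_⟩
      · by_cases hj : j = i <;> simp [hj]
      · by_cases hj : j = i
        · subst hj; simp [h]
        · simp [hj]
      · ext x
        simp only [mem_iInter, mem_empty_iff_false, iff_false]
        intro hx
        have := hx i
        simp at this
    · exact h
  have hsig : ∀ i, ∃ σ : (ℕ → ℕ) → α, Continuous σ ∧ range σ = A i := by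
    intro i
    have h := hA i
    rw [AnalyticSet] at h
    rcases h with h | h
    · exact absurd h (hne i).ne_empty
    · exact h
  choose σ hσc hσr using hsig
  -- family of sets associated to a table of prefixes
  set Fam : ((ℕ → ℕ) × (ℕ → ℕ → ℕ)) → ℕ → Set α :=
    fun p i => σ i '' cyl (p.1 i) (p.2 i) with hFam
  -- one refinement step
  have key : ∀ (t : ℕ) (p : (ℕ → ℕ) × (ℕ → ℕ → ℕ)), ¬ Emptiable (Fam p) →
      ∃ m, ¬ Emptiable (Fam
        (Function.update p.1 (Nat.unpair t).1 (p.1 (Nat.unpair t).1 + 1),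
         Function.update p.2 (Nat.unpair t).1
           (Function.update (p.2 (Nat.unpair t).1) (p.1 (Nat.unpair t).1) m))) := by
    intro t p hp
    set i := (Nat.unpair t).1 with hi
    have hsub : Fam p i ⊆ ⋃ m, σ i '' cyl (p.1 i + 1) (Function.update (p.2 i) (p.1 i) m) := by
      rw [hFam]
      simp only
      rw [cyl_succ (p.1 i) (p.2 i), image_iUnion]
    obtain ⟨m, hm⟩ := refine_step hp i hsub
    refine ⟨m, fun hc => hm ?_⟩
    convert hc using 1
    funext j
    by_cases hj : j = i
    · subst hj
      simp [Fam, Function.update_self]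
    · simp [Fam, Function.update_of_ne hj]
  choose! stepm hstep using key
  -- the recursively defined tables
  set LG : ℕ → (ℕ → ℕ) × (ℕ → ℕ → ℕ) :=
    fun t => Nat.rec (fun _ => 0, fun _ _ => 0)
      (fun t p =>
        (Function.update p.1 (Nat.unpair t).1 (p.1 (Nat.unpair t).1 + 1),
         Function.update p.2 (Nat.unpair t).1
           (Function.update (p.2 (Nat.unpair t).1) (p.1 (Nat.unpair t).1) (stepm t p)))) t
      with hLG
  have hLGsucc : ∀ t, LG (t + 1) =
      (Function.update (LG t).1 (Nat.unpair t).1 ((LG t).1 (Nat.unpair t).1 + 1),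
       Function.update (LG t).2 (Nat.unpair t).1
         (Function.update ((LG t).2 (Nat.unpair t).1) ((LG t).1 (Nat.unpair t).1)
           (stepm t (LG t)))) := fun t => rfl
  have hbadt : ∀ t, ¬ Emptiable (Fam (LG t)) := by
    intro t
    induction t with
    | zero =>
      have : Fam (LG 0) = A := by
        funext i
        show σ i '' cyl 0 _ = A i
        rw [cyl_zero, image_univ, hσr i]
      rw [this]
      exact hbad
    | succ t ih =>
      rw [hLGsucc t]
      exact hstep t (LG t) ih
  -- monotonicity of lengths
  have hLmono1 : ∀ t i, (LG t).1 i ≤ (LG (t + 1)).1 i := by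
    intro t i
    rw [hLGsucc t]
    by_cases hi : i = (Nat.unpair t).1
    · subst hi; simp
    · simp [Function.update_of_ne hi]
  have hLmono : ∀ s t, s ≤ t → ∀ i, (LG s).1 i ≤ (LG t).1 i := by
    intro s t hst
    induction t, hst using Nat.le_induction with
    | base => exact fun i => le_rfl
    | succ t hst ih => exact fun i => (ih i).trans (hLmono1 t i)
  -- coherence of digits
  have hgcoh1 : ∀ t i k, k < (LG t).1 i → (LG (t + 1)).2 i k = (LG t).2 i k := by
    intro t i k hk
    rw [hLGsucc t]
    by_cases hi : i = (Nat.unpair t).1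
    · subst hi
      simp only [Function.update_self]
      exact Function.update_of_ne (Nat.ne_of_lt hk) _ _
    · simp [Function.update_of_ne hi]
  have hgcoh : ∀ s t, s ≤ t → ∀ i k, k < (LG s).1 i → (LG t).2 i k = (LG s).2 i k := by
    intro s t hst
    induction t, hst using Nat.le_induction with
    | base => intro i k _; rfl
    | succ t hst ih =>
      intro i k hk
      rw [hgcoh1 t i k (lt_of_lt_of_le hk (hLmono s t hst i)), ih i k hk]
  -- lengths are unbounded
  have hLunb : ∀ i N, ∃ t, N ≤ (LG t).1 i := by
    intro i N
    induction N with
    | zero => exact ⟨0, Nat.zero_le _⟩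
    | succ N ihN =>
      obtain ⟨t, ht⟩ := ihN
      refine ⟨Nat.pair i t + 1, ?_⟩
      have h1 : (LG (Nat.pair i t + 1)).1 i = (LG (Nat.pair i t)).1 i + 1 := by
        rw [hLGsucc (Nat.pair i t), Nat.unpair_pair]
        exact Function.update_self _ _ _
      rw [h1]
      have h2 : (LG t).1 i ≤ (LG (Nat.pair i t)).1 i :=
        hLmono t (Nat.pair i t) (Nat.right_le_pair i t) i
      omega
  -- the limit branches
  set xlim : ℕ → ℕ → ℕ := fun i k => (LG (Nat.find (hLunb i (k + 1)))).2 i k with hxlim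
  have hx_in : ∀ t i, xlim i ∈ cyl ((LG t).1 i) ((LG t).2 i) := by
    intro t i k hk
    set s := Nat.find (hLunb i (k + 1)) with hs
    have hks : k < (LG s).1 i := Nat.find_spec (hLunb i (k + 1))
    have e1 : (LG (max t s)).2 i k = (LG t).2 i k := hgcoh t (max t s) (le_max_left t s) i k hk
    have e2 : (LG (max t s)).2 i k = (LG s).2 i k := hgcoh s (max t s) (le_max_right t s) i k hks
    show (LG s).2 i k = (LG t).2 i k
    rw [← e2, e1]
  -- all limit points agree
  have hall : ∀ i j, σ i (xlim i) = σ j (xlim j) := by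
    intro i j
    by_contra hne2
    have hij : i ≠ j := by rintro rfl; exact hne2 rfl
    obtain ⟨U, V, hU, hV, hzU, hzV, hUV⟩ := t2_separation hne2
    obtain ⟨N₁, hN₁⟩ := exists_cyl_subset (hσc i) hU hzU
    obtain ⟨N₂, hN₂⟩ := exists_cyl_subset (hσc j) hV hzV
    obtain ⟨t₁, ht₁⟩ := hLunb i N₁
    obtain ⟨t₂, ht₂⟩ := hLunb j N₂
    set T := max t₁ t₂ with hT
    have hTi : N₁ ≤ (LG T).1 i := ht₁.trans (hLmono t₁ T (le_max_left _ _) i)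
    have hTj : N₂ ≤ (LG T).1 j := ht₂.trans (hLmono t₂ T (le_max_right _ _) j)
    have h1 : Fam (LG T) i ⊆ U := by
      rintro _ ⟨y, hy, rfl⟩
      refine hN₁ y fun k hk => ?_
      rw [hy k (lt_of_lt_of_le hk hTi)]
      exact (hx_in T i k (lt_of_lt_of_le hk hTi)).symm
    have h2 : Fam (LG T) j ⊆ V := by
      rintro _ ⟨y, hy, rfl⟩
      refine hN₂ y fun k hk => ?_
      rw [hy k (lt_of_lt_of_le hk hTj)]
      exact (hx_in T j k (lt_of_lt_of_le hk hTj)).symm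
    apply hbadt T
    refine ⟨fun w => if w = i then U else if w = j then V else univ, fun w => ?_, fun w => ?_, ?_⟩
    · by_cases hw : w = i
      · simp only [if_pos hw]; exact hU.measurableSet
      · simp only [if_neg hw]
        by_cases hw' : w = j
        · simp only [if_pos hw']; exact hV.measurableSet
        · simp [hw']
    · by_cases hw : w = i
      · subst hw; simpa using h1
      · simp only [if_neg hw]
        by_cases hw' : w = j
        · subst hw'; simpa [hij.symm] using h2
        · simp [hw']
    · ext x
      simp only [mem_iInter, mem_empty_iff_false, iff_false]
      intro hx
      have hxi := hx i
      rw [if_pos rfl] at hxi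
      have hxj := hx j
      rw [if_neg hij.symm, if_pos rfl] at hxj
      exact (hUV.le_bot ⟨hxi, hxj⟩ : x ∈ (⊥ : Set α))
  -- contradiction with empty intersection
  have hz : σ 0 (xlim 0) ∈ ⋂ i, A i := by
    refine mem_iInter.2 fun i => ?_
    rw [hall 0 i, ← hσr i]
    exact mem_range_self _
  rw [hempty] at hz
  exact hz

/-- Shrinking a countable cover by co-analytic sets to a Borel cover. -/
theorem shrink_cover [TopologicalSpace α] [T2Space α] [MeasurableSpace α]
    [OpensMeasurableSpace α] {C : ℕ → Set α} (hC : ∀ i, AnalyticSet (C i)ᶜ)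
    (hcover : ∀ x, ∃ i, x ∈ C i) :
    ∃ D : ℕ → Set α, (∀ i, MeasurableSet (D i)) ∧ (∀ i, D i ⊆ C i) ∧ ∀ x, ∃ i, x ∈ D i := by
  have hempty : (⋂ i, (C i)ᶜ) = ∅ := by
    ext x
    simp only [mem_iInter, mem_compl_iff, mem_empty_iff_false, iff_false, not_forall, not_not]
    exact hcover x
  obtain ⟨B, hBmeas, hBsub, hBempty⟩ := novikov hC hempty
  refine ⟨fun i => (B i)ᶜ, fun i => (hBmeas i).compl, fun i => ?_, fun x => ?_⟩
  · rw [compl_subset_comm]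
    exact hBsub i
  · by_contra hx
    push_neg at hx
    have : x ∈ ⋂ i, B i := mem_iInter.2 fun i => by
      have := hx i
      simpa [not_not] using this
    rw [hBempty] at this
    exact this


/-! ### Geometry of the feasible sets -/

section Main

variable {X Y : Type*}
  [TopologicalSpace X] [PolishSpace X] [MeasurableSpace X] [BorelSpace X]
  [TopologicalSpace Y] [PolishSpace Y] [MeasurableSpace Y] [BorelSpace Y]
  {n : ℕ}

/-- Euclidean pairing. -/
def dotp {n : ℕ} (v w : Fin n → ℝ) : ℝ := ∑ i, v i * w i

lemma continuous_dotp (n : ℕ) :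
    Continuous (fun p : (Fin n → ℝ) × (Fin n → ℝ) => dotp p.1 p.2) := by
  refine continuous_finset_sum _ fun i _ => ?_
  exact ((continuous_apply i).comp continuous_fst).mul ((continuous_apply i).comp continuous_snd)

lemma continuous_dotp_left {n : ℕ} (w : Fin n → ℝ) :
    Continuous (fun v : Fin n → ℝ => dotp v w) :=
  (continuous_dotp n).comp (continuous_id.prodMk continuous_const)

/-- The feasible set of coefficient vectors at a point. -/
def Sfeas (f : X → Y → ℝ) (φ : Y → Fin n → ℝ) (x : X) : Set (Fin n → ℝ) :=
  {v | ∀ y, f x y ≤ dotp v (φ y)}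

/-- Closedness of the solvability region of a finite system. -/
lemma isClosed_exists_sol {n m : ℕ} (c : Fin n → ℝ) (r : ℝ) (ρ : Fin m → ℝ) :
    IsClosed {w : Fin m → Fin n → ℝ |
      ∃ v ∈ Metric.closedBall c r, ∀ i, ρ i ≤ dotp v (w i)} := by
  apply IsSeqClosed.isClosed
  intro w wlim hw hlim
  choose v hvball hvineq using hw
  obtain ⟨a, ha, ψ, hψ, hψt⟩ := (isCompact_closedBall c r).tendsto_subseq hvball
  refine ⟨a, ha, fun i => ?_⟩
  have hwi : Tendsto (fun k => w (ψ k) i) atTop (𝓝 (wlim i)) :=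
    ((continuous_apply i).continuousAt.tendsto).comp (hlim.comp hψ.tendsto_atTop)
  have h1 : Tendsto (fun k => dotp (v (ψ k)) (w (ψ k) i)) atTop (𝓝 (dotp a (wlim i))) :=
    ((continuous_dotp n).continuousAt.tendsto).comp (hψt.prodMk_nhds hwi)
  exact ge_of_tendsto h1 (Eventually.of_forall fun k => hvineq (ψ k) i)

/-- If a finite system over a closed ball has no solution, then it has no solution for some
rational relaxation of the right-hand sides. -/
lemma exists_rat_relax {n m : ℕ} (c : Fin n → ℝ) (r : ℝ) (w : Fin m → Fin n → ℝ)
    (b : Fin m → ℝ)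
    (hemp : {v | v ∈ Metric.closedBall c r ∧ ∀ i, b i ≤ dotp v (w i)} = ∅) :
    ∃ ρ : Fin m → ℚ, (∀ i, (ρ i : ℝ) ≤ b i) ∧
      {v | v ∈ Metric.closedBall c r ∧ ∀ i, (ρ i : ℝ) ≤ dotp v (w i)} = ∅ := by
  have key : ∃ j : ℕ,
      {v | v ∈ Metric.closedBall c r ∧ ∀ i, b i - 1/((j:ℝ)+1) ≤ dotp v (w i)} = ∅ := by
    by_contra hc
    push_neg at hc
    choose v hv using hc
    obtain ⟨a, ha, ψ, hψ, hψt⟩ := (isCompact_closedBall c r).tendsto_subseq fun j => (hv j).1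
    have hmem : a ∈ {v | v ∈ Metric.closedBall c r ∧ ∀ i, b i ≤ dotp v (w i)} := by
      refine ⟨ha, fun i => ?_⟩
      have h1 : Tendsto (fun j => dotp (v (ψ j)) (w i)) atTop (𝓝 (dotp a (w i))) :=
        ((continuous_dotp_left (w i)).continuousAt.tendsto).comp hψt
      have h2 : Tendsto (fun j : ℕ => b i - 1/((ψ j : ℝ)+1)) atTop (𝓝 (b i)) := by
        have h3 : Tendsto (fun j : ℕ => 1/((j:ℝ)+1)) atTop (𝓝 0) :=
          tendsto_one_div_add_atTop_nhds_zero_nat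
        have h4 := (h3.comp hψ.tendsto_atTop).const_sub (b i)
        simpa using h4
      exact le_of_tendsto_of_tendsto' h2 h1 fun j => (hv (ψ j)).2 i
    rw [hemp] at hmem
    exact hmem
  obtain ⟨j, hj⟩ := key
  have hρ : ∀ i, ∃ q : ℚ, b i - 1/((j:ℝ)+1) < (q:ℝ) ∧ (q:ℝ) ≤ b i := by
    intro i
    have hlt : b i - 1/((j:ℝ)+1) < b i := by
      have h0 : (0:ℝ) < 1/((j:ℝ)+1) := by positivity
      linarith
    obtain ⟨q, h1, h2⟩ := exists_rat_btwn hlt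
    exact ⟨q, h1, le_of_lt h2⟩
  choose ρ h1 h2 using hρ
  refine ⟨ρ, h2, ?_⟩
  rw [eq_empty_iff_forall_notMem] at hj ⊢
  intro v hvmem
  exact hj v ⟨hvmem.1, fun i => le_trans (le_of_lt (h1 i)) (hvmem.2 i)⟩

variable (f : X → Y → ℝ) (φ : Y → Fin n → ℝ)

/-- The set of pairs `(x, ys)` such that the finite system given by `ys` has no solution
in the closed ball. -/
def FeasEmpty (m : ℕ) (c : Fin n → ℝ) (r : ℝ) : Set (X × (Fin (m+1) → Y)) :=
  {p | {v | v ∈ Metric.closedBall c r ∧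
    ∀ i, f p.1 (p.2 i) ≤ dotp v (φ (p.2 i))} = ∅}

lemma analyticSet_feasEmpty
    (husa : ∀ γ : ℝ, AnalyticSet {p : X × Y | γ < f p.1 p.2}) (hφ : Measurable φ)
    (m : ℕ) (c : Fin n → ℝ) (r : ℝ) :
    AnalyticSet (FeasEmpty f φ m c r) := by
  have hrep : FeasEmpty f φ m c r = ⋃ (ρ : Fin (m+1) → ℚ),
      ((⋂ (z : Fin (m+1) × ℕ),
        (fun p : X × (Fin (m+1) → Y) => (p.1, p.2 z.1)) ⁻¹'
          {q : X × Y | (ρ z.1 : ℝ) - 1/((z.2:ℝ)+1) < f q.1 q.2}) ∩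
       ((fun p : X × (Fin (m+1) → Y) => fun i => φ (p.2 i)) ⁻¹'
        {w : Fin (m+1) → Fin n → ℝ |
          {v | v ∈ Metric.closedBall c r ∧ ∀ i, (ρ i : ℝ) ≤ dotp v (w i)} = ∅})) := by
    ext p
    simp only [FeasEmpty, mem_setOf_eq, mem_iUnion, mem_inter_iff, mem_iInter, mem_preimage]
    constructor
    · intro hp
      obtain ⟨ρ, hρle, hρemp⟩ :=
        exists_rat_relax c r (fun i => φ (p.2 i)) (fun i => f p.1 (p.2 i)) hp
      refine ⟨ρ, fun z => ?_, hρemp⟩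
      have h0 : (0:ℝ) < 1/((z.2:ℝ)+1) := by positivity
      have h1 := hρle z.1
      show (ρ z.1 : ℝ) - 1/((z.2:ℝ)+1) < f p.1 (p.2 z.1)
      linarith
    · rintro ⟨ρ, hlt, hemp⟩
      have hle : ∀ i, (ρ i : ℝ) ≤ f p.1 (p.2 i) := by
        intro i
        by_contra hcon
        push_neg at hcon
        obtain ⟨j, hj⟩ := exists_nat_one_div_lt (sub_pos.2 hcon)
        have h2 := hlt (i, j)
        simp only at h2
        have h3 : (ρ i : ℝ) - 1/((j:ℝ)+1) < f p.1 (p.2 i) := h2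
        linarith
      rw [eq_empty_iff_forall_notMem] at hemp ⊢
      intro v hvmem
      exact hemp v ⟨hvmem.1, fun i => le_trans (hle i) (hvmem.2 i)⟩
  rw [hrep]
  apply AnalyticSet.iUnion
  intro ρ
  rw [Set.inter_eq_iInter]
  apply AnalyticSet.iInter
  intro b
  cases b with
  | true =>
    show AnalyticSet (⋂ (z : Fin (m+1) × ℕ), _)
    apply AnalyticSet.iInter
    intro z
    apply AnalyticSet.preimage (husa _)
    exact continuous_fst.prodMk ((continuous_apply z.1).comp continuous_snd)
  | false =>
    show AnalyticSet ((fun p : X × (Fin (m+1) → Y) => fun i => φ (p.2 i)) ⁻¹' _)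
    apply MeasurableSet.analyticSet
    have hmapm : Measurable (fun p : X × (Fin (m+1) → Y) => fun i => φ (p.2 i)) :=
      measurable_pi_lambda _ fun i => hφ.comp ((measurable_pi_apply i).comp measurable_snd)
    apply hmapm
    have hcl := isClosed_exists_sol (m := m+1) c r (fun i => (ρ i : ℝ))
    have heq : {w : Fin (m+1) → Fin n → ℝ |
        {v | v ∈ Metric.closedBall c r ∧ ∀ i, (ρ i : ℝ) ≤ dotp v (w i)} = ∅} =
        {w : Fin (m+1) → Fin n → ℝ |
          ∃ v ∈ Metric.closedBall c r, ∀ i, (ρ i : ℝ) ≤ dotp v (w i)}ᶜ := by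
      ext w
      simp [eq_empty_iff_forall_notMem, not_exists]
    rw [heq]
    exact hcl.measurableSet.compl

/-- Analyticity of the set of `x` where the feasible set misses a given closed ball. -/
lemma analyticSet_misses_ball
    (husa : ∀ γ : ℝ, AnalyticSet {p : X × Y | γ < f p.1 p.2}) (hφ : Measurable φ)
    (c : Fin n → ℝ) (r : ℝ) (hr : 0 ≤ r) :
    AnalyticSet {x : X | Sfeas f φ x ∩ Metric.closedBall c r = ∅} := by
  have hrep : {x : X | Sfeas f φ x ∩ Metric.closedBall c r = ∅} =
      ⋃ m, Prod.fst '' FeasEmpty f φ m c r := by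
    ext x
    simp only [mem_setOf_eq, mem_iUnion, mem_image, Prod.exists]
    constructor
    · intro hx
      have hclosed : ∀ y : Y, IsClosed {v : Fin n → ℝ | f x y ≤ dotp v (φ y)} :=
        fun y => isClosed_le continuous_const (continuous_dotp_left (φ y))
      have hempty2 : Metric.closedBall c r ∩ ⋂ y : Y, {v | f x y ≤ dotp v (φ y)} = ∅ := by
        rw [eq_empty_iff_forall_notMem] at hx ⊢
        intro v hvmem
        exact hx v ⟨fun y => mem_iInter.1 hvmem.2 y, hvmem.1⟩
      obtain ⟨u, hu⟩ :=
        (isCompact_closedBall c r).elim_finite_subfamily_closed _ hclosed hempty2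
      have hune : u.Nonempty := by
        rcases Finset.eq_empty_or_nonempty u with h | h
        · exfalso
          rw [h] at hu
          simp only [Finset.notMem_empty, iInter_of_empty, iInter_univ, inter_univ] at hu
          have hc : c ∈ Metric.closedBall c r := Metric.mem_closedBall_self hr
          rw [hu] at hc
          exact hc
        · exact h
      obtain ⟨m, hm⟩ : ∃ m, u.toList.length = m + 1 := by
        have h1 : u.toList.length = u.card := Finset.length_toList u
        have h2 : 0 < u.card := Finset.card_pos.2 hune
        exact ⟨u.card - 1, by omega⟩
      refine ⟨m, x, fun i => u.toList.get (Fin.cast hm.symm i), ?_, rfl⟩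
      show {v | v ∈ Metric.closedBall c r ∧
        ∀ i : Fin (m+1), f x (u.toList.get (Fin.cast hm.symm i)) ≤
          dotp v (φ (u.toList.get (Fin.cast hm.symm i)))} = ∅
      rw [eq_empty_iff_forall_notMem] at hu ⊢
      intro v hvmem
      apply hu v
      refine ⟨hvmem.1, ?_⟩
      refine mem_iInter.2 fun y => mem_iInter.2 fun hy => ?_
      have hy' : y ∈ u.toList := (Finset.mem_toList).2 hy
      obtain ⟨k, hk⟩ := List.mem_iff_get.1 hy'
      have hys : u.toList.get (Fin.cast hm.symm (Fin.cast hm k)) = y := by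
        rw [← hk]
        congr 1
      rw [← hys]
      exact hvmem.2 (Fin.cast hm k)
    · rintro ⟨m, x', ys, hFE, rfl⟩
      have hFE' : {v : Fin n → ℝ | v ∈ Metric.closedBall c r ∧
          ∀ i, f x' (ys i) ≤ dotp v (φ (ys i))} = ∅ := hFE
      rw [eq_empty_iff_forall_notMem] at hFE' ⊢
      intro v hvmem
      exact hFE' v ⟨hvmem.2, fun i => hvmem.1 (ys i)⟩
  rw [hrep]
  exact AnalyticSet.iUnion fun m =>
    (analyticSet_feasEmpty f φ husa hφ m c r).image_of_continuous continuous_fst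

/-- First-index measurable selector for a countable measurable cover. -/
lemma exists_measurable_selector {D : ℕ → Set X} (hD : ∀ i, MeasurableSet (D i))
    (hcov : ∀ x, ∃ i, x ∈ D i) : ∃ κ : X → ℕ, Measurable κ ∧ ∀ x, x ∈ D (κ x) := by
  classical
  refine ⟨fun x => Nat.find (hcov x), ?_, fun x => Nat.find_spec (hcov x)⟩
  apply measurable_to_countable
  intro x₀
  have hset : (fun x => Nat.find (hcov x)) ⁻¹' {Nat.find (hcov x₀)} =
      D (Nat.find (hcov x₀)) ∩ ⋂ (j : ℕ) (_ : j < Nat.find (hcov x₀)), (D j)ᶜ := by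
    ext x
    simp only [mem_preimage, mem_singleton_iff, mem_inter_iff, mem_iInter, mem_compl_iff,
      Nat.find_eq_iff]
  rw [hset]
  exact (hD _).inter (MeasurableSet.iInter fun j => MeasurableSet.iInter fun _ => (hD j).compl)

/-- One refinement step of the construction. -/
lemma step_exists
    (husa : ∀ γ : ℝ, AnalyticSet {p : X × Y | γ < f p.1 p.2}) (hφ : Measurable φ)
    (e : ℕ → Fin n → ℝ) (he : DenseRange e) (k : ℕ) (κ : X → ℕ) (hκ : Measurable κ)
    (hinv : ∀ x, ∃ v ∈ Sfeas f φ x, dist v (e (κ x)) ≤ (1/2:ℝ)^k) :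
    ∃ κ' : X → ℕ, Measurable κ' ∧
      (∀ x, ∃ v ∈ Sfeas f φ x, dist v (e (κ' x)) ≤ (1/2:ℝ)^(k+1)) ∧
      (∀ x, dist (e (κ' x)) (e (κ x)) ≤ (1/2:ℝ)^k + (1/2:ℝ)^(k+1)) := by
  classical
  set C : ℕ → Set X := fun i =>
    (if dist (e (Nat.unpair i).2) (e (Nat.unpair i).1) ≤ (1/2:ℝ)^k + (1/2:ℝ)^(k+1)
      then {x | κ x = (Nat.unpair i).1} else ∅) ∩
    {x | Sfeas f φ x ∩ Metric.closedBall (e (Nat.unpair i).2) ((1/2:ℝ)^(k+1)) ≠ ∅}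
    with hC
  have hCco : ∀ i, AnalyticSet (C i)ᶜ := by
    intro i
    rw [hC]
    simp only [Set.compl_inter]
    rw [Set.union_eq_iUnion]
    apply AnalyticSet.iUnion
    intro b
    cases b with
    | true =>
      show AnalyticSet (if _ then {x | κ x = (Nat.unpair i).1} else ∅)ᶜ
      split_ifs with hcond
      · exact (MeasurableSet.compl (hκ (measurableSet_singleton _))).analyticSet
      · simp only [compl_empty]
        exact MeasurableSet.analyticSet MeasurableSet.univ
    | false =>
      show AnalyticSet {x | Sfeas f φ x ∩
        Metric.closedBall (e (Nat.unpair i).2) ((1/2:ℝ)^(k+1)) ≠ ∅}ᶜ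
      have heq : {x | Sfeas f φ x ∩
          Metric.closedBall (e (Nat.unpair i).2) ((1/2:ℝ)^(k+1)) ≠ ∅}ᶜ =
          {x | Sfeas f φ x ∩ Metric.closedBall (e (Nat.unpair i).2) ((1/2:ℝ)^(k+1)) = ∅} := by
        ext x
        simp [not_not]
      rw [heq]
      exact analyticSet_misses_ball f φ husa hφ _ _ (by positivity)
  have hcov : ∀ x, ∃ i, x ∈ C i := by
    intro x
    obtain ⟨v, hvS, hvd⟩ := hinv x
    obtain ⟨l, hl⟩ := he.exists_dist_lt v (show (0:ℝ) < (1/2:ℝ)^(k+1) by positivity)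
    refine ⟨Nat.pair (κ x) l, ?_⟩
    rw [hC]
    simp only [Nat.unpair_pair, mem_inter_iff]
    constructor
    · have hcond : dist (e l) (e (κ x)) ≤ (1/2:ℝ)^k + (1/2:ℝ)^(k+1) := by
        calc dist (e l) (e (κ x)) ≤ dist (e l) v + dist v (e (κ x)) := dist_triangle _ _ _
          _ ≤ (1/2:ℝ)^(k+1) + (1/2:ℝ)^k := by
              have := dist_comm (e l) v ▸ hl
              have h2 : dist (e l) v ≤ (1/2:ℝ)^(k+1) := by
                rw [dist_comm]; exact le_of_lt hl
              exact add_le_add h2 hvd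
          _ = (1/2:ℝ)^k + (1/2:ℝ)^(k+1) := by ring
      rw [if_pos hcond]
      exact rfl
    · show Sfeas f φ x ∩ Metric.closedBall (e l) ((1/2:ℝ)^(k+1)) ≠ ∅
      apply nonempty_iff_ne_empty.1
      exact ⟨v, hvS, Metric.mem_closedBall.2 (le_of_lt hl)⟩
  obtain ⟨D, hDmeas, hDsub, hDcov⟩ := shrink_cover hCco hcov
  obtain ⟨κsel, hκselm, hκselmem⟩ := exists_measurable_selector hDmeas hDcov
  refine ⟨fun x => (Nat.unpair (κsel x)).2,
    (measurable_from_top (f := fun i : ℕ => (Nat.unpair i).2)).comp hκselm, ?_, ?_⟩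
  · intro x
    have hx := hDsub (κsel x) (hκselmem x)
    rw [hC] at hx
    obtain ⟨-, h2⟩ := hx
    obtain ⟨v, hvS, hvball⟩ := nonempty_iff_ne_empty.2 h2
    exact ⟨v, hvS, Metric.mem_closedBall.1 hvball⟩
  · intro x
    have hx := hDsub (κsel x) (hκselmem x)
    rw [hC] at hx
    obtain ⟨h1, -⟩ := hx
    by_cases hcond : dist (e (Nat.unpair (κsel x)).2) (e (Nat.unpair (κsel x)).1) ≤
        (1/2:ℝ)^k + (1/2:ℝ)^(k+1)
    · rw [if_pos hcond] at h1
      have hκx : κ x = (Nat.unpair (κsel x)).1 := h1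
      rw [hκx]
      exact hcond
    · rw [if_neg hcond] at h1
      exact absurd h1 (notMem_empty x)

/-- The base step of the construction. -/
lemma base_exists
    (husa : ∀ γ : ℝ, AnalyticSet {p : X × Y | γ < f p.1 p.2}) (hφ : Measurable φ)
    (hne : ∀ x, (Sfeas f φ x).Nonempty)
    (e : ℕ → Fin n → ℝ) (he : DenseRange e) :
    ∃ κ : X → ℕ, Measurable κ ∧
      ∀ x, ∃ v ∈ Sfeas f φ x, dist v (e (κ x)) ≤ (1/2:ℝ)^0 := by
  set C : ℕ → Set X := fun i =>
    {x | Sfeas f φ x ∩ Metric.closedBall (e i) ((1/2:ℝ)^0) ≠ ∅} with hC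
  have hCco : ∀ i, AnalyticSet (C i)ᶜ := by
    intro i
    have heq : (C i)ᶜ =
        {x | Sfeas f φ x ∩ Metric.closedBall (e i) ((1/2:ℝ)^0) = ∅} := by
      ext x
      simp [hC, not_not]
    rw [heq]
    exact analyticSet_misses_ball f φ husa hφ _ _ (by positivity)
  have hcov : ∀ x, ∃ i, x ∈ C i := by
    intro x
    obtain ⟨v, hvS⟩ := hne x
    obtain ⟨l, hl⟩ := he.exists_dist_lt v (show (0:ℝ) < (1/2:ℝ)^0 by positivity)
    refine ⟨l, ?_⟩
    show Sfeas f φ x ∩ Metric.closedBall (e l) ((1/2:ℝ)^0) ≠ ∅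
    apply nonempty_iff_ne_empty.1
    exact ⟨v, hvS, Metric.mem_closedBall.2 (le_of_lt hl)⟩
  obtain ⟨D, hDmeas, hDsub, hDcov⟩ := shrink_cover hCco hcov
  obtain ⟨κsel, hκselm, hκselmem⟩ := exists_measurable_selector hDmeas hDcov
  refine ⟨κsel, hκselm, fun x => ?_⟩
  have hx := hDsub (κsel x) (hκselmem x)
  rw [hC] at hx
  obtain ⟨v, hvS, hvball⟩ := nonempty_iff_ne_empty.2 hx
  exact ⟨v, hvS, Metric.mem_closedBall.1 hvball⟩

end Main

end FeatureMapSel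

open FeatureMapSel in
/-- Feature-map selection: domination through a Borel feature map φ : Y → ℝⁿ can
be achieved with Borel measurable coefficients. -/
theorem feature_map_selection {X Y : Type*}
    [TopologicalSpace X] [PolishSpace X] [MeasurableSpace X] [BorelSpace X]
    [TopologicalSpace Y] [PolishSpace Y] [MeasurableSpace Y] [BorelSpace Y]
    {n : ℕ} (f : X → Y → ℝ)
    (husa : ∀ γ : ℝ, AnalyticSet {p : X × Y | γ < f p.1 p.2})
    (φ : Y → Fin n → ℝ) (hφ : Measurable φ)
    (a : X → Fin n → ℝ)
    (hdom : ∀ x y, f x y ≤ ∑ i, a x i * φ y i) :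
    ∃ A : X → Fin n → ℝ, Measurable A ∧
      ∀ x y, f x y ≤ ∑ i, A x i * φ y i := by
  classical
  have hne : ∀ x, (Sfeas f φ x).Nonempty := fun x => ⟨a x, fun y => hdom x y⟩
  set e : ℕ → Fin n → ℝ := TopologicalSpace.denseSeq (Fin n → ℝ) with he_def
  have he : DenseRange e := TopologicalSpace.denseRange_denseSeq _
  obtain ⟨κ0, hκ0m, hκ0inv⟩ := base_exists f φ husa hφ hne e he
  have step : ∀ (k : ℕ) (κ : X → ℕ), Measurable κ →
      (∀ x, ∃ v ∈ Sfeas f φ x, dist v (e (κ x)) ≤ (1/2:ℝ)^k) →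
      ∃ κ' : X → ℕ, Measurable κ' ∧
        (∀ x, ∃ v ∈ Sfeas f φ x, dist v (e (κ' x)) ≤ (1/2:ℝ)^(k+1)) ∧
        (∀ x, dist (e (κ' x)) (e (κ x)) ≤ (1/2:ℝ)^k + (1/2:ℝ)^(k+1)) :=
    fun k κ hκ hinv => step_exists f φ husa hφ e he k κ hκ hinv
  choose! next hnext using step
  set seq : ℕ → X → ℕ := fun k => Nat.rec κ0 (fun k ih => next k ih) k with hseq_def
  have hseq : ∀ k, Measurable (seq k) ∧
      (∀ x, ∃ v ∈ Sfeas f φ x, dist v (e (seq k x)) ≤ (1/2:ℝ)^k) := by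
    intro k
    induction k with
    | zero => exact ⟨hκ0m, hκ0inv⟩
    | succ k ih =>
      have h := hnext k (seq k) ih.1 ih.2
      exact ⟨h.1, h.2.1⟩
  have hclose : ∀ k x, dist (e (seq (k+1) x)) (e (seq k x)) ≤ (1/2:ℝ)^k + (1/2:ℝ)^(k+1) :=
    fun k => (hnext k (seq k) (hseq k).1 (hseq k).2).2.2
  set c : ℕ → X → Fin n → ℝ := fun k x => e (seq k x) with hc_def
  have hcmeas : ∀ k, Measurable (c k) :=
    fun k => (measurable_from_top (f := e)).comp (hseq k).1
  have hcauchy : ∀ x, ∃ L, Tendsto (fun k => c k x) atTop (𝓝 L) := by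
    intro x
    apply cauchySeq_tendsto_of_complete
    apply cauchySeq_of_le_geometric (1/2 : ℝ) 2 (by norm_num)
    intro k
    have h := hclose k x
    have h2 : (1/2:ℝ)^(k+1) ≤ (1/2:ℝ)^k := by
      apply pow_le_pow_of_le_one (by norm_num) (by norm_num) (Nat.le_succ k)
    calc dist (c k x) (c (k+1) x) = dist (e (seq (k+1) x)) (e (seq k x)) := dist_comm _ _
      _ ≤ (1/2:ℝ)^k + (1/2:ℝ)^(k+1) := h
      _ ≤ 2 * (1/2:ℝ)^k := by linarith
  choose A hA using hcauchy
  refine ⟨A, ?_, ?_⟩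
  · exact measurable_of_tendsto_metrizable hcmeas (tendsto_pi_nhds.2 hA)
  · intro x y
    have hv : ∀ k, ∃ v, v ∈ Sfeas f φ x ∧ dist v (c k x) ≤ (1/2:ℝ)^k := by
      intro k
      obtain ⟨v, hv1, hv2⟩ := (hseq k).2 x
      exact ⟨v, hv1, hv2⟩
    choose v hv1 hv2 using hv
    have hvlim : Tendsto v atTop (𝓝 (A x)) := by
      rw [tendsto_iff_dist_tendsto_zero]
      have hb : Tendsto (fun k => (1/2:ℝ)^k + dist (c k x) (A x)) atTop (𝓝 0) := by
        have h1 : Tendsto (fun k : ℕ => (1/2:ℝ)^k) atTop (𝓝 0) := by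
          apply tendsto_pow_atTop_nhds_zero_of_lt_one (by norm_num) (by norm_num)
        have h2 : Tendsto (fun k => dist (c k x) (A x)) atTop (𝓝 0) :=
          tendsto_iff_dist_tendsto_zero.1 (hA x)
        simpa using h1.add h2
      apply squeeze_zero (fun k => dist_nonneg) (fun k => ?_) hb
      calc dist (v k) (A x) ≤ dist (v k) (c k x) + dist (c k x) (A x) := dist_triangle _ _ _
        _ ≤ (1/2:ℝ)^k + dist (c k x) (A x) := by
            have := hv2 k
            linarith [dist_nonneg (x := c k x) (y := A x)]
    have hdt : Tendsto (fun k => dotp (v k) (φ y)) atTop (𝓝 (dotp (A x) (φ y))) :=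
      ((continuous_dotp_left (φ y)).continuousAt.tendsto).comp hvlim
    have hfinal : f x y ≤ dotp (A x) (φ y) :=
      ge_of_tendsto hdt (Eventually.of_forall fun k => hv1 k y)
    exact hfinal
end
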